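/- arXiv:1410.4753 — 11 statements merged into one kernel-verified Lean document; each statement's English description precedes it below -/
import Mathlib

section
/- Let (X,T) be a compact Hausdorff dynamical system with a transitive point x*, and let p ∈ E(X,T). The following are equivalent: (i) p is continuous on X; (ii) p∘q = q∘p on X for every q ∈ E(X,T); (iii) p(q(x*)) = q(p(x*)) for every q ∈ E(X,T). -/
open Filter Topology

/-- The `n`-th iterate (for `n : ℤ`) of a homeomorphism `T`. -/
def hIter {X : Type*} [TopologicalSpace X] (T : X ≃ₜ X) (n : ℤ) : X → X :=
  fun x => (T.toEquiv ^ n) x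

/-- The enveloping semigroup of `(X,T)`: the closure of `{Tⁿ : n ∈ ℤ}` in `X → X` with
the product (pointwise convergence) topology. -/
def envSG {X : Type*} [TopologicalSpace X] (T : X ≃ₜ X) : Set (X → X) :=
  closure (Set.range (hIter T))

/-!
Every `p ∈ E(X,T)` commutes with the iterates `Tⁿ`, since commuting with a fixed continuous
map is a closed condition on `p`. If `p` is continuous, `p ∘ q = q ∘ p` is a closed condition
on `q`, so it spreads from the iterates to all of `E(X,T)`. Conversely, `q ↦ q x*` is a
continuous map from the compact space `E(X,T)` onto `X` (its image is closed and contains the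
dense orbit of `x*`), hence a quotient map; condition (iii) says that `p` composed with it is
the evaluation `q ↦ q (p x*)`, which is continuous, so `p` is continuous.
-/

section Iterates

variable {X : Type*} [TopologicalSpace X] (T : X ≃ₜ X)

lemma hIter_eq_coe_zpow (n : ℤ) : hIter T n = ⇑(T ^ n) := by
  let toPerm : (X ≃ₜ X) →* Equiv.Perm X :=
    { toFun := Homeomorph.toEquiv, map_one' := rfl, map_mul' := fun _ _ => rfl }
  exact congrArg DFunLike.coe (map_zpow toPerm T n).symm

lemma continuous_hIter (n : ℤ) : Continuous (hIter T n) := by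
  rw [hIter_eq_coe_zpow]
  exact (T ^ n).continuous

lemma hIter_hIter_comm (m n : ℤ) (x : X) :
    hIter T m (hIter T n x) = hIter T n (hIter T m x) := by
  simp only [hIter_eq_coe_zpow, ← Homeomorph.mul_apply, (Commute.zpow_zpow_self T m n).eq]

lemma hIter_mem_envSG (n : ℤ) : hIter T n ∈ envSG T :=
  subset_closure ⟨n, rfl⟩

lemma envSG_subset_of_isClosed {S : Set (X → X)} (hS : IsClosed S) (h : ∀ n, hIter T n ∈ S) :
    envSG T ⊆ S :=
  closure_minimal (Set.range_subset_iff.2 h) hS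

lemma continuous_eval_envSG (x : X) : Continuous fun q : envSG T => (q : X → X) x :=
  (continuous_apply x).comp continuous_subtype_val

instance compactSpace_envSG [CompactSpace X] : CompactSpace (envSG T) :=
  isCompact_iff_compactSpace.mp isClosed_closure.isCompact

end Iterates

section EnvelopingSemigroup

variable {X : Type*} [TopologicalSpace X] [T2Space X] {T : X ≃ₜ X} {p : X → X}

lemma apply_hIter_of_mem_envSG (hp : p ∈ envSG T) (n : ℤ) (x : X) :
    p (hIter T n x) = hIter T n (p x) := by
  have hclosed : IsClosed {f : X → X | f (hIter T n x) = hIter T n (f x)} :=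
    isClosed_eq (continuous_apply _) ((continuous_hIter T n).comp (continuous_apply x))
  exact envSG_subset_of_isClosed T hclosed (fun m => hIter_hIter_comm T m n x) hp

lemma apply_comm_of_continuous_of_mem_envSG (hp : p ∈ envSG T) (hc : Continuous p)
    {q : X → X} (hq : q ∈ envSG T) (x : X) : p (q x) = q (p x) := by
  have hclosed : IsClosed {f : X → X | p (f x) = f (p x)} :=
    isClosed_eq (hc.comp (continuous_apply x)) (continuous_apply (p x))
  exact envSG_subset_of_isClosed T hclosed (fun n => apply_hIter_of_mem_envSG hp n x) hq

variable [CompactSpace X]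

lemma surjective_eval_envSG {xs : X} (hxs : Dense (Set.range fun n : ℤ => hIter T n xs)) :
    Function.Surjective fun q : envSG T => (q : X → X) xs := by
  have horbit :
      (Set.range fun n : ℤ => hIter T n xs) ⊆ Set.range fun q : envSG T => (q : X → X) xs := by
    rintro _ ⟨n, rfl⟩
    exact ⟨⟨hIter T n, hIter_mem_envSG T n⟩, rfl⟩
  have hclosed := (isCompact_range (continuous_eval_envSG T xs)).isClosed
  rw [← Set.range_eq_univ, ← hclosed.closure_eq, ← dense_iff_closure_eq]
  exact hxs.mono horbit

lemma continuous_of_apply_comm_at_transitive {xs : X}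
    (hxs : Dense (Set.range fun n : ℤ => hIter T n xs))
    (h : ∀ q ∈ envSG T, p (q xs) = q (p xs)) : Continuous p := by
  have hquot : IsQuotientMap fun q : envSG T => (q : X → X) xs :=
    (continuous_eval_envSG T xs).isClosedMap.isQuotientMap (continuous_eval_envSG T xs)
      (surjective_eval_envSG hxs)
  rw [hquot.continuous_iff]
  have hcomp :
      (p ∘ fun q : envSG T => (q : X → X) xs) = fun q : envSG T => (q : X → X) (p xs) :=
    funext fun q => h q q.2
  rw [hcomp]
  exact continuous_eval_envSG T (p xs)

end EnvelopingSemigroup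

theorem stmt0_general {X : Type*} [TopologicalSpace X] [CompactSpace X] [T2Space X]
    (T : X ≃ₜ X) (xs : X) (hxs : Dense (Set.range fun n : ℤ => hIter T n xs))
    (p : X → X) (hp : p ∈ envSG T) :
    List.TFAE [Continuous p,
      ∀ q ∈ envSG T, ∀ x : X, p (q x) = q (p x),
      ∀ q ∈ envSG T, p (q xs) = q (p xs)] := by
  tfae_have 1 → 2 := fun hc q hq x => apply_comm_of_continuous_of_mem_envSG hp hc hq x
  tfae_have 2 → 3 := fun h q hq => h q hq xs
  tfae_have 3 → 1 := continuous_of_apply_comm_at_transitive hxs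
  tfae_finish

/-- For a compact Hausdorff system `(X,T)` with a transitive point `x*` and `p` in the
enveloping semigroup, the following are equivalent: (i) `p` is continuous; (ii) `p` commutes
with every `q` in the enveloping semigroup; (iii) `p (q x*) = q (p x*)` for every `q` in the
enveloping semigroup. -/
theorem stmt0 {X : Type*} [TopologicalSpace X] [CompactSpace X] [T2Space X] [Nonempty X]
    (T : X ≃ₜ X) (xs : X) (hxs : Dense (Set.range fun n : ℤ => hIter T n xs))
    (p : X → X) (hp : p ∈ envSG T) :
    List.TFAE [Continuous p,
      ∀ q ∈ envSG T, ∀ x : X, p (q x) = q (p x),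
      ∀ q ∈ envSG T, p (q xs) = q (p xs)] :=
  stmt0_general T xs hxs p hp
end

section
/- An expansive compact metric dynamical system (X,T) is hereditarily almost equicontinuous (HAE) if and only if X is countable. In particular, a subshift (a nonempty closed shift-invariant subset of {0,1}^ℤ with the shift) is HAE if and only if it is countable. -/
open Filter Topology

/-- `x` is an equicontinuity point of the subsystem on `Y`, with respect to the
distance function `d` and the iterates `Tn`. -/
def EqPt {X : Type*} (d : X → X → ℝ) (Tn : ℤ → X → X) (Y : Set X) (x : X) : Prop :=
  ∀ ε > (0 : ℝ), ∃ δ > (0 : ℝ), ∀ y ∈ Y, d x y < δ → ∀ n : ℤ, d (Tn n x) (Tn n y) < ε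

/-- The subsystem on `Y` is almost equicontinuous: its equicontinuity points are dense in `Y`. -/
def AEOn {X : Type*} [TopologicalSpace X] (d : X → X → ℝ) (Tn : ℤ → X → X) (Y : Set X) : Prop :=
  Y ⊆ closure {x ∈ Y | EqPt d Tn Y x}

/-- The subsystem of `(X,T)` on `Z` is hereditarily almost equicontinuous: every nonempty
closed invariant subset of `Z` is almost equicontinuous. -/
def HAEOn {X : Type*} [TopologicalSpace X] (d : X → X → ℝ) (T : X ≃ₜ X) (Z : Set X) : Prop :=
  ∀ Y ⊆ Z, Y.Nonempty → IsClosed Y → ⇑T '' Y = Y → AEOn d (hIter T) Y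

/-- The shift homeomorphism on `{0,1}^ℤ`. -/
def shiftH : (ℤ → Bool) ≃ₜ (ℤ → Bool) where
  toFun x := fun n => x (n + 1)
  invFun x := fun n => x (n - 1)
  left_inv x := by funext n; simp
  right_inv x := by funext n; simp
  continuous_toFun := continuous_pi fun n => continuous_apply (n + 1)
  continuous_invFun := continuous_pi fun n => continuous_apply (n - 1)

/-- The standard metric on `{0,1}^ℤ`: `d(x,y) = inf {2^{-N} : x_t = y_t for all |t| < N}`. -/
noncomputable def bdist (x y : ℤ → Bool) : ℝ :=
  sInf {r : ℝ | ∃ N : ℕ, (∀ t : ℤ, |t| < (N : ℤ) → x t = y t) ∧ r = (2 : ℝ) ^ (-(N : ℤ))}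

/-!
In an expansive system an equicontinuity point `x` of a closed invariant set `Y` is isolated in
`Y`: points of `Y` close enough to `x` stay within the expansivity constant of `x` along the
whole orbit, so they equal `x`. Conversely, isolated points are trivially equicontinuity points.
Hence HAE means that every nonempty closed invariant set has an isolated point. If `X` is
uncountable, its Cantor–Bendixson perfect kernel is a nonempty closed invariant set without
isolated points; if `X` is countable, the Baire category theorem makes the isolated points of
every closed subset dense in it.
-/

open CantorBendixson

def IsExpansiveWith {X : Type*} (d : X → X → ℝ) (Tn : ℤ → X → X) (ε : ℝ) : Prop :=
  ∀ x y, x ≠ y → ∃ n : ℤ, ε < d (Tn n x) (Tn n y)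

section PerfectKernel

variable {X : Type*} [TopologicalSpace X]

theorem Perfect.image_homeomorph {Y : Type*} [TopologicalSpace Y] {C : Set X} (hC : Perfect C)
    (h : X ≃ₜ Y) : Perfect (h '' C) := by
  refine ⟨h.isClosedMap C hC.closed, ?_⟩
  rintro _ ⟨x, hx, rfl⟩
  simpa only [Filter.map_principal] using (hC.acc x hx).map h.continuous.continuousAt h.injective

theorem image_perfectKernel_subset (h : X ≃ₜ X) {s : Set X} (hs : IsClosed s) :
    h '' perfectKernel s ⊆ perfectKernel (h '' s) :=
  ((perfect_perfectKernel hs).image_homeomorph h).subset_perfectKernel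
    (Set.image_mono (perfectKernel_subset s))

theorem image_perfectKernel (h : X ≃ₜ X) {s : Set X} (hs : IsClosed s) (hhs : h '' s = s) :
    h '' perfectKernel s = perfectKernel s := by
  refine (hhs ▸ image_perfectKernel_subset h hs).antisymm fun x hx => ?_
  have hsymm : h.symm '' s = s := by
    rw [h.image_symm, ← hhs, h.preimage_image, hhs]
  exact ⟨h.symm x, hsymm ▸ image_perfectKernel_subset h.symm hs ⟨x, hx, rfl⟩, h.apply_symm_apply x⟩

theorem perfectKernel_nonempty [SecondCountableTopology X] {s : Set X} (hs : IsClosed s)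
    (hunc : ¬s.Countable) : (perfectKernel s).Nonempty := by
  obtain ⟨D, hD, hDne, hDs⟩ := exists_perfect_nonempty_of_isClosed_of_not_countable hs hunc
  exact hDne.mono (hD.subset_perfectKernel hDs)

end PerfectKernel

/- Distances are arbitrary functions `d` whose small balls form neighbourhood bases, so that
both `dist` and `bdist` fit. -/

section Equicontinuity

variable {X : Type*} [TopologicalSpace X] {d : X → X → ℝ} {Tn : ℤ → X → X} {Y : Set X}

theorem IsExpansiveWith.not_eqPt_of_accPt {ε : ℝ} (hexp : IsExpansiveWith d Tn ε) (hε : 0 < ε)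
    (hd : ∀ x, ∀ δ > 0, ∀ᶠ y in 𝓝 x, d x y < δ) {x : X} (hx : AccPt x (𝓟 Y)) :
    ¬EqPt d Tn Y x := by
  intro hEq
  obtain ⟨δ, hδ, hclose⟩ := hEq ε hε
  obtain ⟨y, ⟨hxy, hy⟩, hyx⟩ := accPt_iff_nhds.1 hx _ (hd x δ hδ)
  obtain ⟨n, hn⟩ := hexp x y hyx.symm
  exact (hclose y hy hxy n).not_gt hn

theorem IsExpansiveWith.not_aeOn_of_perfect {ε : ℝ} (hexp : IsExpansiveWith d Tn ε) (hε : 0 < ε)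
    (hd : ∀ x, ∀ δ > 0, ∀ᶠ y in 𝓝 x, d x y < δ) (hY : Perfect Y) (hYne : Y.Nonempty) :
    ¬AEOn d Tn Y := by
  intro hAE
  have hnone : {x ∈ Y | EqPt d Tn Y x} = ∅ :=
    Set.eq_empty_of_forall_notMem fun x ⟨hx, hEq⟩ => hexp.not_eqPt_of_accPt hε hd (hY.acc x hx) hEq
  obtain ⟨x, hx⟩ := hYne
  simpa [hnone] using hAE hx

theorem eqPt_of_singleton_mem_nhdsWithin (hd0 : ∀ x, d x x = 0)
    (hd : ∀ x, ∀ U ∈ 𝓝 x, ∃ δ > 0, ∀ y, d x y < δ → y ∈ U) {x : X} (hx : {x} ∈ 𝓝[Y] x) :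
    EqPt d Tn Y x := by
  obtain ⟨U, hU, hUY⟩ := mem_nhdsWithin_iff_exists_mem_nhds_inter.1 hx
  obtain ⟨δ, hδ, hδU⟩ := hd x U hU
  refine fun ε hε => ⟨δ, hδ, fun y hy hxy n => ?_⟩
  obtain rfl : y = x := hUY ⟨hδU y hxy, hy⟩
  simpa [hd0] using hε

theorem aeOn_of_isClosed_of_countable [T2Space X] [CompactSpace X] (hd0 : ∀ x, d x x = 0)
    (hd : ∀ x, ∀ U ∈ 𝓝 x, ∃ δ > 0, ∀ y, d x y < δ → y ∈ U) (hY : IsClosed Y)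
    (hYc : Y.Countable) : AEOn d Tn Y := by
  have : CompactSpace Y := isCompact_iff_compactSpace.1 hY.isCompact
  have : Countable Y := hYc.to_subtype
  have hdense : Dense (⋃ y : Y, interior {y}) :=
    dense_iUnion_interior_of_closed (fun _ => isClosed_singleton) (Set.iUnion_of_singleton Y)
  refine (Subtype.dense_iff.1 hdense).trans (closure_mono ?_)
  rintro _ ⟨y, hy, rfl⟩
  obtain ⟨z, hz⟩ := Set.mem_iUnion.1 hy
  obtain rfl := Set.mem_singleton_iff.1 (interior_subset hz)
  refine ⟨y.2, eqPt_of_singleton_mem_nhdsWithin hd0 hd ?_⟩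
  simpa using mem_nhds_subtype_iff_nhdsWithin.1 (mem_interior_iff_mem_nhds.1 hz)

end Equicontinuity

section HAE

variable {X : Type*} [TopologicalSpace X] {d : X → X → ℝ} {T : X ≃ₜ X} {Z : Set X}

theorem countable_of_haeOn [SecondCountableTopology X] {ε : ℝ} (hε : 0 < ε)
    (hexp : IsExpansiveWith d (hIter T) ε) (hd : ∀ x, ∀ δ > 0, ∀ᶠ y in 𝓝 x, d x y < δ)
    (hZ : IsClosed Z) (hTZ : T '' Z = Z) (h : HAEOn d T Z) : Z.Countable := by
  by_contra hunc
  have hK := perfect_perfectKernel hZ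
  have hKne := perfectKernel_nonempty hZ hunc
  exact hexp.not_aeOn_of_perfect hε hd hK hKne
    (h _ (perfectKernel_subset Z) hKne hK.closed (image_perfectKernel T hZ hTZ))

theorem haeOn_of_countable [T2Space X] [CompactSpace X] (hd0 : ∀ x, d x x = 0)
    (hd : ∀ x, ∀ U ∈ 𝓝 x, ∃ δ > 0, ∀ y, d x y < δ → y ∈ U) (hZ : Z.Countable) :
    HAEOn d T Z :=
  fun _ hYZ _ hY _ => aeOn_of_isClosed_of_countable hd0 hd hY (hZ.mono hYZ)

end HAE

theorem exists_two_zpow_neg_lt {δ : ℝ} (hδ : 0 < δ) : ∃ M : ℕ, (2 : ℝ) ^ (-(M : ℤ)) < δ := by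
  obtain ⟨M, hM⟩ := exists_pow_lt_of_lt_one hδ (by norm_num : (2⁻¹ : ℝ) < 1)
  exact ⟨M, by simpa [zpow_neg, inv_pow] using hM⟩

theorem bdist_le_two_zpow_neg {x y : ℤ → Bool} {N : ℕ} (h : ∀ t : ℤ, |t| < N → x t = y t) :
    bdist x y ≤ 2 ^ (-(N : ℤ)) :=
  csInf_le ⟨0, fun _ ⟨_, _, hr⟩ => hr ▸ by positivity⟩ ⟨N, h, rfl⟩

theorem exists_forall_abs_lt_eq_of_bdist_lt {x y : ℤ → Bool} {r : ℝ} (h : bdist x y < r) :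
    ∃ N : ℕ, (∀ t : ℤ, |t| < N → x t = y t) ∧ (2 : ℝ) ^ (-(N : ℤ)) < r := by
  obtain ⟨_, ⟨N, hN, rfl⟩, hr⟩ := exists_lt_of_csInf_lt (by exact ⟨1, 0, by simp, by simp⟩) h
  exact ⟨N, hN, hr⟩

theorem bdist_lt_two_zpow_neg_iff {x y : ℤ → Bool} {M : ℕ} :
    bdist x y < 2 ^ (-(M : ℤ)) ↔ ∀ t : ℤ, |t| ≤ M → x t = y t := by
  constructor
  · intro h t ht
    obtain ⟨N, hN, hlt⟩ := exists_forall_abs_lt_eq_of_bdist_lt h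
    have hMN : M < N := by
      have := (zpow_lt_zpow_iff_right₀ (by norm_num : (1 : ℝ) < 2)).1 hlt
      omega
    exact hN t (by omega)
  · intro h
    calc bdist x y ≤ 2 ^ (-((M + 1 : ℕ) : ℤ)) :=
          bdist_le_two_zpow_neg fun t ht => h t (by omega)
      _ < 2 ^ (-(M : ℤ)) := zpow_lt_zpow_right₀ (by norm_num) (by omega)

theorem bdist_self (x : ℤ → Bool) : bdist x x = 0 := by
  refine le_antisymm (le_of_not_gt fun hpos => ?_)
    (le_csInf ⟨1, 0, by simp, by simp⟩ fun _ ⟨_, _, hr⟩ => hr ▸ by positivity)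
  obtain ⟨M, hM⟩ := exists_two_zpow_neg_lt hpos
  exact (bdist_lt_two_zpow_neg_iff.2 fun _ _ => rfl).not_ge hM.le

theorem eventually_forall_abs_le_eq (x : ℤ → Bool) (M : ℕ) :
    ∀ᶠ y in 𝓝 x, ∀ t : ℤ, |t| ≤ M → y t = x t := by
  have hcoord : ∀ t, ∀ᶠ y in 𝓝 x, y t = x t := fun t =>
    tendsto_pure.1 (by simpa only [nhds_discrete] using (continuous_apply t).tendsto x)
  filter_upwards [(eventually_all_finite (Set.finite_Icc (-(M : ℤ)) M)).2 fun t _ => hcoord t]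
    with y hy t ht
  exact hy t (Set.mem_Icc.2 (abs_le.1 ht))

theorem exists_forall_abs_le_eq_subset {x : ℤ → Bool} {U : Set (ℤ → Bool)} (hU : U ∈ 𝓝 x) :
    ∃ M : ℕ, ∀ y, (∀ t : ℤ, |t| ≤ M → y t = x t) → y ∈ U := by
  rw [nhds_pi, Filter.mem_pi'] at hU
  obtain ⟨I, V, hV, hIV⟩ := hU
  refine ⟨I.sup Int.natAbs, fun y hy => hIV fun t ht => ?_⟩
  have htM : |t| ≤ (I.sup Int.natAbs : ℕ) := by
    rw [Int.abs_eq_natAbs]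
    exact_mod_cast Finset.le_sup (f := Int.natAbs) ht
  exact hy t htM ▸ mem_of_mem_nhds (hV t)

theorem eventually_bdist_lt (x : ℤ → Bool) {δ : ℝ} (hδ : 0 < δ) : ∀ᶠ y in 𝓝 x, bdist x y < δ := by
  obtain ⟨M, hM⟩ := exists_two_zpow_neg_lt hδ
  filter_upwards [eventually_forall_abs_le_eq x M] with y hy
  exact (bdist_lt_two_zpow_neg_iff.2 fun t ht => (hy t ht).symm).trans hM

theorem exists_bdist_lt_subset {x : ℤ → Bool} {U : Set (ℤ → Bool)} (hU : U ∈ 𝓝 x) :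
    ∃ δ > 0, ∀ y, bdist x y < δ → y ∈ U := by
  obtain ⟨M, hM⟩ := exists_forall_abs_le_eq_subset hU
  exact ⟨_, by positivity, fun y hy => hM y fun t ht => (bdist_lt_two_zpow_neg_iff.1 hy t ht).symm⟩

theorem one_le_bdist {x y : ℤ → Bool} (h : x 0 ≠ y 0) : 1 ≤ bdist x y :=
  le_of_not_gt fun hlt => h (bdist_lt_two_zpow_neg_iff (M := 0).1 (by simpa using hlt) 0 le_rfl)

theorem hIter_shiftH_apply (n : ℤ) (x : ℤ → Bool) (m : ℤ) : hIter shiftH n x m = x (m + n) := by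
  induction n using Int.induction_on generalizing x m with
  | zero => simp [hIter]
  | succ k ih =>
    simp only [hIter, zpow_add_one, Equiv.Perm.mul_apply] at ih ⊢
    rw [ih]
    show x (m + k + 1) = _
    rw [add_assoc]
  | pred k ih =>
    simp only [hIter, zpow_sub_one, Equiv.Perm.mul_apply] at ih ⊢
    rw [ih]
    show x (m + -k - 1) = _
    rw [add_sub_assoc]

theorem isExpansiveWith_shiftH : IsExpansiveWith bdist (hIter shiftH) (1 / 2) := by
  intro x y hxy
  obtain ⟨t, ht⟩ := Function.ne_iff.1 hxy
  refine ⟨t, lt_of_lt_of_le (by norm_num) (one_le_bdist ?_)⟩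
  simpa [hIter_shiftH_apply] using ht

/-- An expansive compact metric system is hereditarily almost equicontinuous iff the space is
countable; in particular, a subshift of `{0,1}^ℤ` is hereditarily almost equicontinuous iff it
is countable. -/
theorem stmt2 :
    (∀ (X : Type) [MetricSpace X] [CompactSpace X] [Nonempty X] (T : X ≃ₜ X),
      (∃ ε > (0 : ℝ), ∀ x y : X, x ≠ y → ∃ n : ℤ, ε < dist (hIter T n x) (hIter T n y)) →
      (HAEOn dist T Set.univ ↔ Countable X)) ∧
    (∀ Z : Set (ℤ → Bool), Z.Nonempty → IsClosed Z → ⇑shiftH '' Z = Z →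
      (HAEOn bdist shiftH Z ↔ Z.Countable)) := by
  refine ⟨fun X _ _ _ T ⟨ε, hε, hexp⟩ => ?_, fun Z _ hZ hTZ => ?_⟩
  · have hball : ∀ x : X, ∀ δ > 0, ∀ᶠ y in 𝓝 x, dist x y < δ := fun x δ hδ => by
      filter_upwards [Metric.ball_mem_nhds x hδ] with y hy
      rwa [dist_comm]
    have hnhds : ∀ x : X, ∀ U ∈ 𝓝 x, ∃ δ > 0, ∀ y, dist x y < δ → y ∈ U := fun x U hU => by
      obtain ⟨δ, hδ, hδU⟩ := Metric.mem_nhds_iff.1 hU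
      exact ⟨δ, hδ, fun y hy => hδU (by rwa [Metric.mem_ball, dist_comm])⟩
    rw [← Set.countable_univ_iff]
    exact ⟨countable_of_haeOn hε hexp hball isClosed_univ (Set.image_univ_of_surjective T.surjective),
      haeOn_of_countable dist_self hnhds⟩
  · exact ⟨countable_of_haeOn (by norm_num) isExpansiveWith_shiftH eventually_bdist_lt hZ hTZ,
      haeOn_of_countable bdist_self fun _ _ => exists_bdist_lt_subset⟩
end

section
/- A compact metric dynamical system (X,T) is proximal (every pair of points is proximal) if and only if there exists a fixed point e ∈ X which is the unique minimal subset of X. Consequently, if (X,T) is proximal then so is (X,T^{-1}). -/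
open Filter Topology

/-- A pair `(x,y)` is proximal: `liminf_{n → +∞} d(Tⁿ x, Tⁿ y) = 0`. -/
def ProximalPair {X : Type*} [PseudoMetricSpace X] (T : X ≃ₜ X) (x y : X) : Prop :=
  Filter.liminf (fun n : ℕ => dist ((⇑T)^[n] x) ((⇑T)^[n] y)) atTop = 0

/-- The system `(X,T)` is proximal: every pair is proximal. -/
def ProximalSystem {X : Type*} [PseudoMetricSpace X] (T : X ≃ₜ X) : Prop :=
  ∀ x y : X, ProximalPair T x y

/-- A minimal subset: a nonempty closed invariant set with no proper nonempty closed
invariant subset. -/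
def IsMinimalSet {X : Type*} [TopologicalSpace X] (T : X ≃ₜ X) (M : Set X) : Prop :=
  M.Nonempty ∧ IsClosed M ∧ ⇑T '' M = M ∧
    ∀ M' ⊆ M, M'.Nonempty → IsClosed M' → ⇑T '' M' = M' → M' = M

/-!
Proximality forces every minimal set to be a fixed point: on a minimal set `M`, the proximal
pair `(x, T x)` makes the displacement `dist z (T z)` arbitrarily small, and its minimum over the
compact set `M` is attained. Two fixed points form a proximal pair only if they coincide, so the
minimal set is unique.

Conversely, if `{e}` is the only minimal set, take a minimal set `N` of `T × T` inside the orbit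
closure of a pair `(x, y)`. Both coordinate projections of `N` are minimal for `T`, hence equal
`{e}`, so `(e, e)` lies in the orbit closure of every pair, which makes every pair proximal.
Since `T` and `T⁻¹` have the same minimal sets, proximality passes to `T⁻¹`.
-/

open Set Function

theorem exists_isMinimalSet_subset {Y : Type*} [TopologicalSpace Y] [CompactSpace Y]
    {S : Y ≃ₜ Y} {A : Set Y} (hne : A.Nonempty) (hcl : IsClosed A) (hinv : S '' A ⊆ A) : ∃ M ⊆ A, IsMinimalSet S M := by
  let 𝒮 : Set (Set Y) := {B | B ⊆ A ∧ B.Nonempty ∧ IsClosed B ∧ S '' B ⊆ B}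
  have chain_bound : ∀ c ⊆ 𝒮, IsChain (· ⊆ ·) c → c.Nonempty → ∃ lb ∈ 𝒮, ∀ s ∈ c, lb ⊆ s := by
    intro c hc𝒮 hchain ⟨B, hB⟩
    refine ⟨⋂₀ c, ⟨(sInter_subset_of_mem hB).trans (hc𝒮 hB).1, ?_, ?_, ?_⟩,
      fun s hs => sInter_subset_of_mem hs⟩
    · have : Nonempty c := ⟨⟨B, hB⟩⟩
      exact IsCompact.nonempty_sInter_of_directed_nonempty_isCompact_isClosed
        (IsChain.directedOn (r := fun s t : Set Y => s ⊇ t) hchain.symm)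
        (fun U hU => (hc𝒮 hU).2.1) (fun U hU => (hc𝒮 hU).2.2.1.isCompact)
        (fun U hU => (hc𝒮 hU).2.2.1)
    · exact isClosed_sInter fun U hU => (hc𝒮 hU).2.2.1
    · rintro _ ⟨y, hy, rfl⟩ U hU
      exact (hc𝒮 hU).2.2.2 (mem_image_of_mem S (hy U hU))
  obtain ⟨M, -, ⟨hMA, hMne, hMcl, hMinv⟩, hMmin⟩ :=
    zorn_superset_nonempty 𝒮 chain_bound A ⟨subset_rfl, hne, hcl, hinv⟩
  -- `S '' M` again lies in the family, so minimality forces invariance of `M`.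
  have hSM : S '' M = M := hMinv.antisymm <| hMmin
    ⟨hMinv.trans hMA, hMne.image S, S.isClosedMap M hMcl, image_mono hMinv⟩ hMinv
  refine ⟨M, hMA, hMne, hMcl, hSM, fun M' hM'M hM'ne hM'cl hM'inv => ?_⟩
  exact hM'M.antisymm (hMmin ⟨hM'M.trans hMA, hM'ne, hM'cl, hM'inv.le⟩ hM'M)

namespace IsMinimalSet

variable {Y : Type*} [TopologicalSpace Y] [CompactSpace Y]

theorem eq_of_subset {S : Y ≃ₜ Y} {M M' : Set Y} (hM : IsMinimalSet S M) (hM'M : M' ⊆ M)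
    (hne : M'.Nonempty) (hcl : IsClosed M') (hinv : S '' M' ⊆ M') : M' = M := by
  obtain ⟨N, hNM', hN⟩ := exists_isMinimalSet_subset hne hcl hinv
  have hNM : N = M := hM.2.2.2 N (hNM'.trans hM'M) hN.1 hN.2.1 hN.2.2.1
  exact hM'M.antisymm (hNM ▸ hNM')

theorem image {X : Type*} [TopologicalSpace X] [T2Space X] {S : Y ≃ₜ Y} {T : X ≃ₜ X}
    {π : Y → X} (hπ : Continuous π) (hsemi : Semiconj π S T) {N : Set Y}
    (hN : IsMinimalSet S N) : IsMinimalSet T (π '' N) := by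
  refine ⟨hN.1.image π, (hN.2.1.isCompact.image hπ).isClosed, ?_, ?_⟩
  · rw [← hsemi.set_image N, hN.2.2.1]
  intro M' hM' hM'ne hM'cl hM'inv
  have hfiber : N ∩ π ⁻¹' M' = N := by
    refine hN.eq_of_subset inter_subset_left ?_ (hN.2.1.inter (hM'cl.preimage hπ)) ?_
    · obtain ⟨_, hm⟩ := hM'ne
      obtain ⟨y, hy, rfl⟩ := hM' hm
      exact ⟨y, hy, hm⟩
    · rintro _ ⟨y, ⟨hy, hyM'⟩, rfl⟩
      refine ⟨hN.2.2.1 ▸ mem_image_of_mem S hy, ?_⟩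
      rw [mem_preimage, hsemi y, ← hM'inv]
      exact mem_image_of_mem T hyM'
  exact hM'.antisymm (image_subset_iff.mpr (hfiber ▸ inter_subset_right))

end IsMinimalSet

theorem isMinimalSet_singleton {X : Type*} [TopologicalSpace X] [T1Space X] {T : X ≃ₜ X} {e : X}
    (he : T e = e) : IsMinimalSet T {e} :=
  ⟨singleton_nonempty e, isClosed_singleton, by rw [image_singleton, he],
    fun _ hM' hne _ _ => (subset_singleton_iff_eq.mp hM').resolve_left hne.ne_empty⟩

theorem Homeomorph.image_symm_eq_self_iff {X : Type*} [TopologicalSpace X] (T : X ≃ₜ X)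
    {M : Set X} : T.symm '' M = M ↔ T '' M = M := by
  constructor <;> intro h
  · calc T '' M = T '' (T.symm '' M) := by rw [h]
      _ = M := T.image_symm_image M
  · calc T.symm '' M = T.symm '' (T '' M) := by rw [h]
      _ = M := T.symm_image_image M

theorem isMinimalSet_symm_iff {X : Type*} [TopologicalSpace X] {T : X ≃ₜ X} {M : Set X} :
    IsMinimalSet T.symm M ↔ IsMinimalSet T M := by
  simp_rw [IsMinimalSet, T.image_symm_eq_self_iff]

theorem proximalPair_iff {X : Type*} [PseudoMetricSpace X] [BoundedSpace X] {T : X ≃ₜ X}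
    {x y : X} :
    ProximalPair T x y ↔ ∀ ε > 0, ∃ᶠ n in atTop, dist (T^[n] x) (T^[n] y) < ε := by
  obtain ⟨C, hC⟩ := Metric.boundedSpace_iff.mp ‹BoundedSpace X›
  have hbdd : IsBoundedUnder (· ≤ ·) atTop fun n => dist (T^[n] x) (T^[n] y) :=
    isBoundedUnder_of ⟨C, fun _ => hC _ _⟩
  have hnonneg : 0 ≤ liminf (fun n => dist (T^[n] x) (T^[n] y)) atTop :=
    le_liminf_of_le hbdd.isCoboundedUnder_ge (Eventually.of_forall fun _ => dist_nonneg)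
  rw [ProximalPair, ← liminf_le_iff hbdd.isCoboundedUnder_ge
    (isBoundedUnder_of ⟨0, fun _ => dist_nonneg⟩)]
  exact ⟨le_of_eq, fun h => h.antisymm hnonneg⟩

theorem ProximalPair.eq_of_fixed {X : Type*} [MetricSpace X] {T : X ≃ₜ X} {x y : X}
    (h : ProximalPair T x y) (hx : T x = x) (hy : T y = y) : x = y := by
  simp only [ProximalPair, iterate_fixed hx, iterate_fixed hy, liminf_const] at h
  exact dist_eq_zero.mp h

section Proximal

variable {X : Type*} [MetricSpace X] [CompactSpace X] {T : X ≃ₜ X}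

theorem IsMinimalSet.exists_eq_singleton_of_proximal (hT : ProximalSystem T) {M : Set X}
    (hM : IsMinimalSet T M) : ∃ z, T z = z ∧ M = {z} := by
  obtain ⟨x, hx⟩ := hM.1
  obtain ⟨z, hzM, hzmin⟩ := hM.2.1.isCompact.exists_isMinOn ⟨x, hx⟩
    (continuous_id.dist T.continuous).continuousOn
  have hdisp : dist z (T z) = 0 := by
    refine le_antisymm (le_of_forall_pos_lt_add fun ε hε => ?_) dist_nonneg
    obtain ⟨n, hn⟩ := (proximalPair_iff.mp (hT x (T x)) ε hε).exists
    have hmem : T^[n] x ∈ M := (mapsTo_iff_image_subset.mpr hM.2.2.1.le).iterate n hx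
    calc dist z (T z) ≤ dist (T^[n] x) (T (T^[n] x)) := hzmin hmem
      _ = dist (T^[n] x) (T^[n] (T x)) := by rw [← iterate_succ_apply, iterate_succ_apply']
      _ < 0 + ε := by rwa [zero_add]
  have hTz : T z = z := (dist_eq_zero.mp hdisp).symm
  exact ⟨z, hTz, (hM.2.2.2 {z} (singleton_subset_iff.mpr hzM) (singleton_nonempty z)
    isClosed_singleton (by rw [image_singleton, hTz])).symm⟩

theorem ProximalSystem.exists_fixed_isMinimalSet_unique [Nonempty X] (hT : ProximalSystem T) :
    ∃ e : X, T e = e ∧ IsMinimalSet T {e} ∧ ∀ M : Set X, IsMinimalSet T M → M = {e} := by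
  obtain ⟨M, -, hM⟩ :=
    exists_isMinimalSet_subset (S := T) univ_nonempty isClosed_univ (subset_univ _)
  obtain ⟨e, he, -⟩ := hM.exists_eq_singleton_of_proximal hT
  refine ⟨e, he, isMinimalSet_singleton he, fun N hN => ?_⟩
  obtain ⟨z, hz, rfl⟩ := hN.exists_eq_singleton_of_proximal hT
  rw [(hT z e).eq_of_fixed hz he]

end Proximal

theorem mem_closure_orbit_prod_of_isMinimalSet_eq_singleton {X : Type*} [TopologicalSpace X]
    [CompactSpace X] [T2Space X] {T : X ≃ₜ X} {e : X}
    (huniq : ∀ M : Set X, IsMinimalSet T M → M = {e}) (x y : X) :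
    (e, e) ∈ closure (range fun n => (T.prodCongr T)^[n] (x, y)) := by
  set S := T.prodCongr T
  set orbit := range fun n => S^[n] (x, y)
  have hinv : S '' closure orbit ⊆ closure orbit := by
    refine (image_closure_subset_closure_image S.continuous).trans (closure_mono ?_)
    rintro _ ⟨_, ⟨n, rfl⟩, rfl⟩
    exact ⟨n + 1, iterate_succ_apply' _ _ _⟩
  obtain ⟨N, hNA, hN⟩ := exists_isMinimalSet_subset (A := closure orbit)
    ⟨(x, y), subset_closure ⟨0, rfl⟩⟩ isClosed_closure hinv
  have hfst : Prod.fst '' N = {e} := huniq _ (hN.image continuous_fst fun _ => rfl)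
  have hsnd : Prod.snd '' N = {e} := huniq _ (hN.image continuous_snd fun _ => rfl)
  obtain ⟨p, hp⟩ := hN.1
  have hpe : p = (e, e) :=
    Prod.ext (hfst.subset (mem_image_of_mem _ hp)) (hsnd.subset (mem_image_of_mem _ hp))
  exact hNA (hpe ▸ hp)

theorem proximalSystem_of_isMinimalSet_eq_singleton {X : Type*} [MetricSpace X] [CompactSpace X]
    {T : X ≃ₜ X} {e : X} (huniq : ∀ M : Set X, IsMinimalSet T M → M = {e}) :
    ProximalSystem T := by
  intro x y
  refine proximalPair_iff.mpr fun ε hε => frequently_atTop.mpr fun N => ?_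
  -- Shifting the pair by `N` before approaching `(e, e)` pushes the close return past time `N`.
  obtain ⟨_, ⟨n, rfl⟩, hn⟩ := Metric.mem_closure_iff.mp
    (mem_closure_orbit_prod_of_isMinimalSet_eq_singleton huniq (T^[N] x) (T^[N] y)) (ε / 2)
    (half_pos hε)
  dsimp only at hn
  rw [Homeomorph.coe_prodCongr, Prod.map_iterate, Prod.map_apply, Prod.dist_eq, max_lt_iff,
    ← iterate_add_apply, ← iterate_add_apply] at hn
  refine ⟨n + N, le_add_self, ?_⟩
  calc dist (T^[n + N] x) (T^[n + N] y) ≤ dist e (T^[n + N] x) + dist e (T^[n + N] y) :=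
        dist_triangle_left _ _ _
    _ < ε / 2 + ε / 2 := add_lt_add hn.1 hn.2
    _ = ε := add_halves ε

/-- A compact metric system is proximal iff it has a fixed point which is the unique minimal
subset; consequently if `(X,T)` is proximal then so is `(X,T⁻¹)`. -/
theorem stmt6 {X : Type*} [MetricSpace X] [CompactSpace X] [Nonempty X] (T : X ≃ₜ X) :
    (ProximalSystem T ↔
      ∃ e : X, T e = e ∧ IsMinimalSet T {e} ∧ ∀ M : Set X, IsMinimalSet T M → M = {e}) ∧
    (ProximalSystem T → ProximalSystem T.symm) := by
  refine ⟨⟨ProximalSystem.exists_fixed_isMinimalSet_unique, fun ⟨_, _, _, huniq⟩ =>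
    proximalSystem_of_isMinimalSet_eq_singleton huniq⟩, fun hT => ?_⟩
  obtain ⟨e, -, -, huniq⟩ := hT.exists_fixed_isMinimalSet_unique
  exact proximalSystem_of_isMinimalSet_eq_singleton (T := T.symm)
    fun M hM => huniq M (isMinimalSet_symm_iff.mp hM)
end

section
/- Let M₁ and M₂ be hereditary collections of finite subsets of ℕ (that is, A ⊆ B and B ∈ Mᵢ imply A ∈ Mᵢ), and set M₁ ⊕ M₂ = {A ∪ B : A ∈ M₁, B ∈ M₂}. If M₁ ⊕ M₂ f-contains an infinite set L ⊆ ℕ, then M₁ f-contains an infinite set or M₂ f-contains an infinite set. -/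
/-- A collection `M` of finite subsets of `ℕ` f-contains `L ⊆ ℕ` if every finite subset of `L`
belongs to `M`. -/
def FContainsFin (M : Set (Finset ℕ)) (L : Set ℕ) : Prop :=
  ∀ F : Finset ℕ, ↑F ⊆ L → F ∈ M

/-- If `M₁` and `M₂` are hereditary collections of finite subsets of `ℕ` and
`M₁ ⊕ M₂ = {A ∪ B : A ∈ M₁, B ∈ M₂}` f-contains an infinite set, then `M₁` or `M₂`
f-contains an infinite set. -/
theorem stmt7 (M₁ M₂ : Set (Finset ℕ))
    (h₁ : ∀ A B : Finset ℕ, A ⊆ B → B ∈ M₁ → A ∈ M₁)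
    (h₂ : ∀ A B : Finset ℕ, A ⊆ B → B ∈ M₂ → A ∈ M₂)
    (L : Set ℕ) (hL : L.Infinite)
    (hsum : FContainsFin {F : Finset ℕ | ∃ A ∈ M₁, ∃ B ∈ M₂, F = A ∪ B} L) :
    (∃ L₁ : Set ℕ, L₁.Infinite ∧ FContainsFin M₁ L₁) ∨
    (∃ L₂ : Set ℕ, L₂.Infinite ∧ FContainsFin M₂ L₂) := by
  classical
  set e := Set.Infinite.natEmbedding L hL with he
  set f : ℕ → ℕ := fun i => (e i : ℕ) with hf
  have hfinj : Function.Injective f := fun a b h => e.injective (Subtype.ext h)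
  have hfL : ∀ i, f i ∈ L := fun i => (e i).2
  set L' : Set ℕ := Set.range f with hL'def
  have hL'inf : L'.Infinite := Set.infinite_range_of_injective hfinj
  have hpart : ∀ n : ℕ, ∃ A ∈ M₁, ∃ B ∈ M₂, (Finset.range n).image f = A ∪ B := by
    intro n
    apply hsum
    intro x hx
    simp only [Finset.coe_image, Set.mem_image, Finset.mem_coe, Finset.mem_range] at hx
    obtain ⟨i, _, rfl⟩ := hx
    exact hfL i
  choose A hA B hB hAB using hpart
  set U : Ultrafilter ℕ := Filter.hyperfilter ℕ with hU
  set T : Set ℕ := {x | {n | x ∈ A n} ∈ U} with hT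
  have key : ∀ F : Finset ℕ, ↑F ⊆ L' →
      F.filter (· ∈ T) ∈ M₁ ∧ F.filter (· ∉ T) ∈ M₂ := by
    intro F hF
    -- for each x ∈ F, a good set of indices, belonging to U
    set S : ℕ → Set ℕ := fun x =>
      (if x ∈ T then {n | x ∈ A n} else {n | x ∈ A n}ᶜ)
        ∩ {n | x ∈ (Finset.range n).image f} with hS
    have hSU : ∀ x ∈ F, S x ∈ U := by
      intro x hx
      apply Filter.inter_mem
      · split_ifs with hxT
        · exact hxT
        · exact Ultrafilter.compl_mem_iff_notMem.2 hxT
      · obtain ⟨i, hi⟩ : ∃ i, f i = x := hF hx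
        have hsub : {n | i < n} ⊆ {n | x ∈ (Finset.range n).image f} := by
          intro n hn
          exact Finset.mem_image.2 ⟨i, Finset.mem_range.2 hn, hi⟩
        have hcof : {n | i < n} ∈ Filter.cofinite := by
          rw [Nat.cofinite_eq_atTop]
          exact Filter.eventually_gt_atTop i
        exact Filter.mem_of_superset (Filter.hyperfilter_le_cofinite hcof) hsub
    have hInter : (⋂ x ∈ F, S x) ∈ U := (Filter.biInter_mem F.finite_toSet).2 hSU
    obtain ⟨m, hm⟩ := Filter.nonempty_of_mem hInter
    simp only [Set.mem_iInter] at hm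
    have hm' : ∀ x ∈ F, m ∈ S x := fun x hx => hm x hx
    constructor
    · apply h₁ _ _ _ (hA m)
      intro x hx
      obtain ⟨hxF, hxT⟩ := Finset.mem_filter.1 hx
      have := (hm' x hxF).1
      rw [if_pos hxT] at this
      exact this
    · apply h₂ _ _ _ (hB m)
      intro x hx
      obtain ⟨hxF, hxT⟩ := Finset.mem_filter.1 hx
      have h1 := (hm' x hxF).1
      rw [if_neg hxT] at h1
      have h2 : x ∈ (Finset.range m).image f := (hm' x hxF).2
      rw [hAB m] at h2
      rcases Finset.mem_union.1 h2 with h | h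
      · exact absurd h h1
      · exact h
  have hsplit : (L' ∩ T).Infinite ∨ (L' \ T).Infinite := by
    rw [← Set.infinite_union, Set.inter_union_diff]
    exact hL'inf
  rcases hsplit with hinf | hinf
  · left
    refine ⟨L' ∩ T, hinf, fun F hFsub => ?_⟩
    have hF' : ↑F ⊆ L' := fun x hx => (hFsub hx).1
    have hfil : F.filter (· ∈ T) = F :=
      Finset.filter_true_of_mem fun x hx => (hFsub hx).2
    have := (key F hF').1
    rwa [hfil] at this
  · right
    refine ⟨L' \ T, hinf, fun F hFsub => ?_⟩
    have hF' : ↑F ⊆ L' := fun x hx => (hFsub hx).1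
    have hfil : F.filter (· ∉ T) = F :=
      Finset.filter_true_of_mem fun x hx => (hFsub hx).2
    have := (key F hF').2
    rwa [hfil] at this
end

section
/- If a label 𝓜 f-contains some infinite set L ⊆ ℕ then 𝓜 is not of finite type. If 𝓜 is bounded but not of finite type, then 𝓜 f-contains some infinite set. Hence a bounded label is of finite type if and only if it does not f-contain an infinite set. -/
/-- A label: a hereditary set of ℕ-vectors (finitely supported functions `ℕ → ℕ`). -/
def IsLabel (M : Set (ℕ →₀ ℕ)) : Prop :=
  ∀ m₁ m : ℕ →₀ ℕ, m₁ ≤ m → m ∈ M → m₁ ∈ M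

/-- A label is of finite type if it contains no strictly increasing infinite sequence. -/
def FiniteType (M : Set (ℕ →₀ ℕ)) : Prop :=
  ¬ ∃ f : ℕ → (ℕ →₀ ℕ), (∀ i, f i ∈ M) ∧ StrictMono f

/-- A label is bounded if some `μ : ℕ → ℕ` dominates all its elements pointwise. -/
def BoundedLabel (M : Set (ℕ →₀ ℕ)) : Prop :=
  ∃ μ : ℕ → ℕ, ∀ m ∈ M, ∀ ℓ : ℕ, m ℓ ≤ μ ℓ

/-- The indicator ℕ-vector of a finite set `F ⊆ ℕ`. -/
noncomputable def chiF (F : Finset ℕ) : ℕ →₀ ℕ := ∑ ℓ ∈ F, Finsupp.single ℓ 1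

/-- A label f-contains `L ⊆ ℕ` if the indicator vector of every finite subset of `L`
belongs to it. -/
def FContains (M : Set (ℕ →₀ ℕ)) (L : Set ℕ) : Prop :=
  ∀ F : Finset ℕ, ↑F ⊆ L → chiF F ∈ M

lemma chiF_apply (F : Finset ℕ) (a : ℕ) : chiF F a = if a ∈ F then 1 else 0 := by
  classical
  rw [chiF, Finset.sum_apply']
  simp [Finsupp.single_apply]

/-- If a label f-contains an infinite set then it is not of finite type; a bounded label not of
finite type f-contains some infinite set; hence a bounded label is of finite type iff it does
not f-contain an infinite set. -/
theorem stmt8 (M : Set (ℕ →₀ ℕ)) (hM : IsLabel M) :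
    (∀ L : Set ℕ, L.Infinite → FContains M L → ¬ FiniteType M) ∧
    (BoundedLabel M → ¬ FiniteType M → ∃ L : Set ℕ, L.Infinite ∧ FContains M L) ∧
    (BoundedLabel M → (FiniteType M ↔ ¬ ∃ L : Set ℕ, L.Infinite ∧ FContains M L)) := by
  classical
  have part1 : ∀ L : Set ℕ, L.Infinite → FContains M L → ¬ FiniteType M := by
    intro L hL hFC hFT
    apply hFT
    let e := hL.natEmbedding
    let Fn : ℕ → Finset ℕ := fun n => (Finset.range (n + 1)).image (fun i => (e i : ℕ))
    refine ⟨fun n => chiF (Fn n), ?_, ?_⟩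
    · intro n
      apply hFC
      intro x hx
      simp only [Fn, Finset.coe_image, Set.mem_image, Finset.mem_coe,
        Finset.mem_range] at hx
      obtain ⟨i, _, rfl⟩ := hx
      exact (e i).2
    · apply strictMono_nat_of_lt_succ
      intro n
      have hsub : Fn n ⊆ Fn (n + 1) := by
        apply Finset.image_subset_image
        exact Finset.range_subset_range.mpr (by omega)
      have hmem : ((e (n + 1) : ℕ)) ∈ Fn (n + 1) := by
        simp only [Fn, Finset.mem_image, Finset.mem_range]
        exact ⟨n + 1, by omega, rfl⟩
      have hnmem : ((e (n + 1) : ℕ)) ∉ Fn n := by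
        simp only [Fn, Finset.mem_image, Finset.mem_range]
        rintro ⟨i, hi, hEq⟩
        have : e i = e (n + 1) := Subtype.ext hEq
        have := e.injective this
        omega
      refine lt_of_le_of_ne ?_ ?_
      · rw [Finsupp.le_def]
        intro a
        rw [chiF_apply, chiF_apply]
        by_cases h : a ∈ Fn n
        · simp [h, hsub h]
        · simp [h]
      · intro hEq
        have := congrArg (fun g : ℕ →₀ ℕ => g (e (n + 1) : ℕ)) hEq
        simp only [chiF_apply, hmem, hnmem] at this
        simp at this
  have part2 : BoundedLabel M → ¬ FiniteType M → ∃ L : Set ℕ, L.Infinite ∧ FContains M L := by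
    intro hB hFT'
    obtain ⟨f, hfM, hfmono⟩ := not_not.mp hFT'
    obtain ⟨μ, hμ⟩ := hB
    set L : Set ℕ := ⋃ n, ↑(f n).support with hLdef
    have hFC : FContains M L := by
      intro F hF
      have hpick : ∀ ℓ ∈ F, ∃ n, 0 < f n ℓ := by
        intro ℓ hℓ
        have := hF hℓ
        simp only [hLdef, Set.mem_iUnion, Finset.coe_sort_coe, Finset.mem_coe,
          Finsupp.mem_support_iff] at this
        obtain ⟨n, hn⟩ := this
        exact ⟨n, Nat.pos_of_ne_zero hn⟩
      choose g hg using hpick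
      set N : ℕ := F.sup (fun ℓ => if h : ℓ ∈ F then g ℓ h else 0) with hN
      refine hM _ (f N) ?_ (hfM N)
      rw [Finsupp.le_def]
      intro a
      rw [chiF_apply]
      by_cases ha : a ∈ F
      · simp only [ha, if_true]
        have h1 : g a ha ≤ N := by
          have := Finset.le_sup (f := fun ℓ => if h : ℓ ∈ F then g ℓ h else 0) ha
          simpa [ha] using this
        have h2 : f (g a ha) ≤ f N := (hfmono.monotone h1)
        have := Finsupp.le_def.mp h2 a
        have := hg a ha
        omega
      · simp [ha]
    have hLinf : L.Infinite := by
      by_contra h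
      rw [Set.not_infinite] at h
      set S := h.toFinset with hS
      have key : StrictMono (fun n => ∑ ℓ ∈ S, f n ℓ) := by
        intro a b hab
        have hlt := hfmono hab
        have hle : f a ≤ f b := hlt.le
        have hne : f a ≠ f b := hlt.ne
        have hex : ∃ ℓ, f a ℓ < f b ℓ := by
          by_contra hc
          push_neg at hc
          apply hne
          ext ℓ
          exact le_antisymm (Finsupp.le_def.mp hle ℓ) (hc ℓ)
        obtain ⟨ℓ₀, hℓ₀⟩ := hex
        have hℓS : ℓ₀ ∈ S := by
          rw [hS, Set.Finite.mem_toFinset]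
          refine Set.mem_iUnion.mpr ⟨b, ?_⟩
          simp only [Finset.mem_coe, Finsupp.mem_support_iff]
          omega
        exact Finset.sum_lt_sum (fun i _ => Finsupp.le_def.mp hle i) ⟨ℓ₀, hℓS, hℓ₀⟩
      have h1 : ∀ n, n ≤ ∑ ℓ ∈ S, f n ℓ := fun n => key.le_apply
      have h2 : ∀ n, ∑ ℓ ∈ S, f n ℓ ≤ ∑ ℓ ∈ S, μ ℓ :=
        fun n => Finset.sum_le_sum (fun ℓ _ => hμ (f n) (hfM n) ℓ)
      have := h1 (∑ ℓ ∈ S, μ ℓ + 1)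
      have := h2 (∑ ℓ ∈ S, μ ℓ + 1)
      omega
    exact ⟨L, hLinf, hFC⟩
  refine ⟨part1, part2, ?_⟩
  intro hB
  constructor
  · rintro hFT ⟨L, hL, hFC⟩
    exact part1 L hL hFC hFT
  · intro hno
    by_contra hFT
    exact hno (part2 hB hFT)
end

section
/- For a nonempty label 𝓜 the following are equivalent: (1) whenever m₁, m₂ ∈ 𝓜 have disjoint supports, m₁ + m₂ ∈ 𝓜; (2) 𝓜 is a sublattice: m₁, m₂ ∈ 𝓜 implies the pointwise maximum m₁ ∨ m₂ ∈ 𝓜; (3) 𝓜 = {m : m ≤ ρ} for some function ρ : ℕ → ℕ ∪ {∞}; (4) 𝓜 = {m : m ≤ ρ(𝓜)}, where ρ(𝓜) is the roof of 𝓜. -/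
/-- The roof of a label: `ρ(𝓜)_ℓ = sup {m ℓ : m ∈ 𝓜}` in `ℕ ∪ {∞}`. -/
noncomputable def roof (M : Set (ℕ →₀ ℕ)) (ℓ : ℕ) : ℕ∞ :=
  ⨆ m ∈ M, (m ℓ : ℕ∞)

/-!
Every label lies below its roof. Conversely, a vector below the roof is a sum of single-coordinate
vectors `single ℓ b` with pairwise disjoint supports, each of which lies below some element of the
label (the roof being a supremum of naturals), hence in the label; so closure under disjoint sums
gives the whole down-set of the roof. A down-set of a function `ρ` is closed under `⊔`, and for
vectors with disjoint supports `⊔` is `+`, which closes the cycle.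
-/

theorem le_roof_of_mem {M : Set (ℕ →₀ ℕ)} {m : ℕ →₀ ℕ} (hm : m ∈ M) (ℓ : ℕ) :
    (m ℓ : ℕ∞) ≤ roof M ℓ :=
  le_iSup₂_of_le m hm le_rfl

theorem exists_mem_le_apply_of_le_roof {M : Set (ℕ →₀ ℕ)} {a b : ℕ} (hb : 0 < b)
    (h : (b : ℕ∞) ≤ roof M a) : ∃ m ∈ M, b ≤ m a := by
  have hlt : ((b - 1 : ℕ) : ℕ∞) < roof M a :=
    lt_of_lt_of_le (by exact_mod_cast Nat.sub_one_lt hb.ne') h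
  obtain ⟨m, hm, hbm⟩ := lt_biSup_iff.mp hlt
  exact ⟨m, hm, Nat.le_of_pred_lt (by exact_mod_cast hbm)⟩

namespace IsLabel

variable {M : Set (ℕ →₀ ℕ)}

theorem zero_mem (hM : IsLabel M) (hne : M.Nonempty) : 0 ∈ M :=
  let ⟨m, hm⟩ := hne
  hM 0 m zero_le hm

theorem single_mem_of_le_roof (hM : IsLabel M) (hne : M.Nonempty) {a b : ℕ}
    (h : (b : ℕ∞) ≤ roof M a) : Finsupp.single a b ∈ M := by
  rcases Nat.eq_zero_or_pos b with rfl | hb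
  · simpa using hM.zero_mem hne
  obtain ⟨m, hm, hbm⟩ := exists_mem_le_apply_of_le_roof hb h
  refine hM _ m (fun ℓ => ?_) hm
  rcases eq_or_ne a ℓ with rfl | haℓ
  · simpa using hbm
  · simp [Finsupp.single_eq_of_ne' haℓ]

theorem eq_setOf_le_roof (hM : IsLabel M) (hne : M.Nonempty)
    (hadd : ∀ m₁ ∈ M, ∀ m₂ ∈ M, (∀ ℓ : ℕ, m₁ ℓ = 0 ∨ m₂ ℓ = 0) → m₁ + m₂ ∈ M) :
    M = {m : ℕ →₀ ℕ | ∀ ℓ : ℕ, (m ℓ : ℕ∞) ≤ roof M ℓ} := by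
  refine Set.Subset.antisymm (fun m hm => le_roof_of_mem hm) fun m => ?_
  induction m using Finsupp.induction with
  | zero => exact fun _ => hM.zero_mem hne
  | single_add a b f haf _ ih =>
    intro hle
    have hfa : f a = 0 := Finsupp.notMem_support_iff.mp haf
    have hf : f ∈ M := ih fun ℓ => le_trans (by simp) (hle ℓ)
    have hsingle : Finsupp.single a b ∈ M :=
      hM.single_mem_of_le_roof hne (by simpa [hfa] using hle a)
    refine hadd _ hsingle _ hf fun ℓ => ?_
    rcases eq_or_ne a ℓ with rfl | haℓ
    · exact Or.inr hfa
    · exact Or.inl (Finsupp.single_eq_of_ne' haℓ)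

end IsLabel

theorem coe_sup_apply_le {ρ : ℕ → ℕ∞} {m₁ m₂ : ℕ →₀ ℕ} (hm₁ : ∀ ℓ : ℕ, (m₁ ℓ : ℕ∞) ≤ ρ ℓ)
    (hm₂ : ∀ ℓ : ℕ, (m₂ ℓ : ℕ∞) ≤ ρ ℓ) (ℓ : ℕ) : ((m₁ ⊔ m₂) ℓ : ℕ∞) ≤ ρ ℓ := by
  rw [Finsupp.sup_apply, Nat.mono_cast.map_max]
  exact max_le (hm₁ ℓ) (hm₂ ℓ)

theorem add_mem_of_exists_sup_mem {M : Set (ℕ →₀ ℕ)}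
    (hsup : ∀ m₁ ∈ M, ∀ m₂ ∈ M, ∃ m ∈ M, ∀ ℓ : ℕ, m ℓ = max (m₁ ℓ) (m₂ ℓ)) :
    ∀ m₁ ∈ M, ∀ m₂ ∈ M, (∀ ℓ : ℕ, m₁ ℓ = 0 ∨ m₂ ℓ = 0) → m₁ + m₂ ∈ M := by
  intro m₁ hm₁ m₂ hm₂ hdisj
  obtain ⟨m, hm, hmax⟩ := hsup m₁ hm₁ m₂ hm₂
  have hsum : m₁ + m₂ = m := by
    ext ℓ
    rw [Finsupp.add_apply, hmax ℓ]
    rcases hdisj ℓ with h | h <;> simp [h]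
  exact hsum ▸ hm

/-- For a nonempty label `𝓜`, the following are equivalent:
(1) sums of elements with disjoint supports stay in `𝓜`;
(2) `𝓜` is closed under pointwise maximum;
(3) `𝓜 = {m : m ≤ ρ}` for some `ρ : ℕ → ℕ∞`;
(4) `𝓜 = {m : m ≤ ρ(𝓜)}` for the roof `ρ(𝓜)`. -/
theorem stmt9 (M : Set (ℕ →₀ ℕ)) (hM : IsLabel M) (hne : M.Nonempty) :
    ((∀ m₁ ∈ M, ∀ m₂ ∈ M, (∀ ℓ : ℕ, m₁ ℓ = 0 ∨ m₂ ℓ = 0) → m₁ + m₂ ∈ M) ↔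
      (∀ m₁ ∈ M, ∀ m₂ ∈ M, ∃ m ∈ M, ∀ ℓ : ℕ, m ℓ = max (m₁ ℓ) (m₂ ℓ))) ∧
    ((∀ m₁ ∈ M, ∀ m₂ ∈ M, (∀ ℓ : ℕ, m₁ ℓ = 0 ∨ m₂ ℓ = 0) → m₁ + m₂ ∈ M) ↔
      (∃ ρ : ℕ → ℕ∞, M = {m : ℕ →₀ ℕ | ∀ ℓ : ℕ, (m ℓ : ℕ∞) ≤ ρ ℓ})) ∧
    ((∀ m₁ ∈ M, ∀ m₂ ∈ M, (∀ ℓ : ℕ, m₁ ℓ = 0 ∨ m₂ ℓ = 0) → m₁ + m₂ ∈ M) ↔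
      (M = {m : ℕ →₀ ℕ | ∀ ℓ : ℕ, (m ℓ : ℕ∞) ≤ roof M ℓ})) := by
  have hAD := hM.eq_setOf_le_roof hne
  have hDC : M = {m : ℕ →₀ ℕ | ∀ ℓ : ℕ, (m ℓ : ℕ∞) ≤ roof M ℓ} →
      ∃ ρ : ℕ → ℕ∞, M = {m : ℕ →₀ ℕ | ∀ ℓ : ℕ, (m ℓ : ℕ∞) ≤ ρ ℓ} :=
    fun h => ⟨roof M, h⟩
  have hCB : (∃ ρ : ℕ → ℕ∞, M = {m : ℕ →₀ ℕ | ∀ ℓ : ℕ, (m ℓ : ℕ∞) ≤ ρ ℓ}) →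
      ∀ m₁ ∈ M, ∀ m₂ ∈ M, ∃ m ∈ M, ∀ ℓ : ℕ, m ℓ = max (m₁ ℓ) (m₂ ℓ) := by
    rintro ⟨ρ, rfl⟩ m₁ hm₁ m₂ hm₂
    exact ⟨m₁ ⊔ m₂, coe_sup_apply_le hm₁ hm₂, fun ℓ => Finsupp.sup_apply _ _ _⟩
  have hBA := add_mem_of_exists_sup_mem (M := M)
  exact ⟨⟨hCB ∘ hDC ∘ hAD, hBA⟩, ⟨hDC ∘ hAD, hBA ∘ hCB⟩, ⟨hAD, hBA ∘ hCB ∘ hDC⟩⟩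
end

section
/- The set of recurrent labels is a dense Gδ subset of the space of labels 𝓛𝓐𝓑. -/
/-- `𝓜 − r = {w : w + r ∈ 𝓜}`. -/
def Msub (M : Set (ℕ →₀ ℕ)) (r : ℕ →₀ ℕ) : Set (ℕ →₀ ℕ) := {w | w + r ∈ M}

/-- The indicator function of a set of ℕ-vectors, valued in the (discrete) two-point space. -/
noncomputable def labelInd (M : Set (ℕ →₀ ℕ)) : (ℕ →₀ ℕ) → Bool :=
  fun m => @decide (m ∈ M) (Classical.propDecidable _)

/-- The topology of the space of labels `𝓛𝓐𝓑`: the subspace topology induced from the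
product topology on the power set of the set of ℕ-vectors (equivalently, the topology of the
ultrametric `d(𝓜₁,𝓜₂) = inf {2^{−N} : 𝓜₁ ∩ 𝓑_N = 𝓜₂ ∩ 𝓑_N}`). -/
noncomputable def labTop : TopologicalSpace (Set (ℕ →₀ ℕ)) :=
  TopologicalSpace.induced labelInd inferInstance

/-- A label `𝓜` is recurrent if it lies in the closure of `{𝓜 − r : r > 0}`. -/
def RecurrentLabel (M : Set (ℕ →₀ ℕ)) : Prop :=
  M ∈ @closure _ labTop {M' : Set (ℕ →₀ ℕ) | ∃ r : ℕ →₀ ℕ, 0 < r ∧ M' = Msub M r}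

/-- The space of labels, with its subspace topology. -/
def Lab : Type := {M : Set (ℕ →₀ ℕ) // IsLabel M}

noncomputable def labTopL : TopologicalSpace Lab :=
  TopologicalSpace.induced (Subtype.val : Lab → Set (ℕ →₀ ℕ)) labTop

/-! A basic neighbourhood of a label `𝓜` consists of the labels agreeing with `𝓜` on a finite
set `F` of ℕ-vectors. So `𝓜` is recurrent iff for every finite `F` some shift `𝓜 − r`, `r > 0`,
agrees with `𝓜` on `F`; for fixed `F` and `r` this is an open condition, and countably many `F`
suffice, whence the Gδ property. For density, given `𝓜` and `F`, choose a coordinate `ℓ` not in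
the support of any vector of `F` and let `𝓜'` be the set of vectors whose ℓ-th coordinate, once
set to `0`, lands in `𝓜`. Then `𝓜'` agrees with `𝓜` on `F`, and `𝓜' − e_ℓ = 𝓜'`. -/

open Filter Topology

theorem Finsupp.erase_mono {α M : Type*} [Zero M] [Preorder M] (a : α) {f g : α →₀ M}
    (h : f ≤ g) : f.erase a ≤ g.erase a := by
  classical
  intro i
  simp only [Finsupp.erase_apply]
  split_ifs
  exacts [le_rfl, h i]

theorem IsLabel.preimage_erase {M : Set (ℕ →₀ ℕ)} (hM : IsLabel M) (ℓ : ℕ) :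
    IsLabel (Finsupp.erase ℓ ⁻¹' M) :=
  fun _ _ hle hm => hM _ _ (Finsupp.erase_mono ℓ hle) hm

theorem Msub_preimage_erase_single (M : Set (ℕ →₀ ℕ)) (ℓ n : ℕ) :
    Msub (Finsupp.erase ℓ ⁻¹' M) (Finsupp.single ℓ n) = Finsupp.erase ℓ ⁻¹' M := by
  ext w
  simp [Msub, Finsupp.erase_add, Finsupp.erase_single]

section LabelTopology

attribute [local instance] labTop labTopL

theorem nhds_labTop_hasBasis (M : Set (ℕ →₀ ℕ)) :
    (𝓝 M).HasBasis (fun _ : Finset (ℕ →₀ ℕ) => True)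
      (fun F => {M' | ∀ w ∈ F, (w ∈ M' ↔ w ∈ M)}) := by
  have hpi := (hasBasis_pi_pure (labelInd M)).comap labelInd
  rw [← nhds_discrete, ← nhds_pi, ← nhds_induced] at hpi
  refine hpi.to_hasBasis (fun F hF => ⟨hF.toFinset, trivial, fun M' hM' w hw => ?_⟩)
    (fun F _ => ⟨F, F.finite_toSet, fun M' hM' w hw => ?_⟩)
  · exact decide_eq_decide.mpr (hM' w (hF.mem_toFinset.mpr hw))
  · exact decide_eq_decide.mp (hM' w hw)

theorem nhds_labTopL_hasBasis (p : Lab) :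
    (𝓝 p).HasBasis (fun _ : Finset (ℕ →₀ ℕ) => True)
      (fun F => {q : Lab | ∀ w ∈ F, (w ∈ q.1 ↔ w ∈ p.1)}) := by
  rw [show 𝓝 p = comap Subtype.val (𝓝 p.1) from nhds_induced _ _]
  exact (nhds_labTop_hasBasis p.1).comap Subtype.val

theorem isOpen_of_determined_by_finset {U : Set (Set (ℕ →₀ ℕ))} (G : Finset (ℕ →₀ ℕ))
    (hU : ∀ M M', (∀ w ∈ G, (w ∈ M' ↔ w ∈ M)) → M ∈ U → M' ∈ U) : IsOpen U :=
  isOpen_iff_mem_nhds.mpr fun M hM =>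
    (nhds_labTop_hasBasis M).mem_iff.mpr ⟨G, trivial, fun M' hM' => hU M M' hM' hM⟩

theorem recurrentLabel_iff (M : Set (ℕ →₀ ℕ)) :
    RecurrentLabel M ↔
      ∀ F : Finset (ℕ →₀ ℕ), ∃ r, 0 < r ∧ ∀ w ∈ F, (w + r ∈ M ↔ w ∈ M) := by
  simp [RecurrentLabel, mem_closure_iff_nhds_basis (nhds_labTop_hasBasis M), Msub]

theorem isOpen_setOf_forall_add_mem_iff (F : Finset (ℕ →₀ ℕ)) (r : ℕ →₀ ℕ) :
    IsOpen {M : Set (ℕ →₀ ℕ) | ∀ w ∈ F, (w + r ∈ M ↔ w ∈ M)} := by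
  classical
  refine isOpen_of_determined_by_finset (F ∪ F.image (· + r)) fun M M' hMM' hM w hw => ?_
  rw [hMM' w (by simp [hw]), hMM' (w + r) (by simp [hw]), hM w hw]

theorem isGδ_setOf_recurrentLabel : IsGδ {M : Set (ℕ →₀ ℕ) | RecurrentLabel M} := by
  have h : {M : Set (ℕ →₀ ℕ) | RecurrentLabel M} =
      ⋂ F : Finset (ℕ →₀ ℕ), ⋃ r ∈ {r : ℕ →₀ ℕ | 0 < r},
        {M | ∀ w ∈ F, (w + r ∈ M ↔ w ∈ M)} := by
    ext M
    simp [recurrentLabel_iff]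
  rw [h]
  exact IsGδ.iInter fun F =>
    (isOpen_biUnion fun r _ => isOpen_setOf_forall_add_mem_iff F r).isGδ

theorem RecurrentLabel.of_Msub_eq {M : Set (ℕ →₀ ℕ)} {r : ℕ →₀ ℕ} (hr : 0 < r)
    (h : Msub M r = M) : RecurrentLabel M :=
  subset_closure ⟨r, hr, h.symm⟩

theorem IsLabel.exists_recurrentLabel_agreeOn {M : Set (ℕ →₀ ℕ)} (hM : IsLabel M)
    (F : Finset (ℕ →₀ ℕ)) :
    ∃ M', IsLabel M' ∧ RecurrentLabel M' ∧ ∀ w ∈ F, (w ∈ M' ↔ w ∈ M) := by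
  classical
  obtain ⟨ℓ, hℓ⟩ := Infinite.exists_notMem_finset (F.biUnion Finsupp.support)
  refine ⟨_, hM.preimage_erase ℓ,
    .of_Msub_eq (pos_iff_ne_zero.mpr (by simp)) (Msub_preimage_erase_single M ℓ 1),
    fun w hw => ?_⟩
  have : ℓ ∉ w.support := fun h => hℓ (Finset.mem_biUnion.mpr ⟨w, hw, h⟩)
  simp [Finsupp.erase_of_notMem_support this]

end LabelTopology

/-- The set of recurrent labels is a dense Gδ subset of the space of labels. -/
theorem stmt10 :
    @Dense Lab labTopL {p : Lab | RecurrentLabel p.1} ∧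
    @IsGδ Lab labTopL {p : Lab | RecurrentLabel p.1} := by
  let := labTop
  let := labTopL
  refine ⟨fun p => (mem_closure_iff_nhds_basis (nhds_labTopL_hasBasis p)).mpr fun F _ => ?_,
    isGδ_setOf_recurrentLabel.preimage continuous_induced_dom⟩
  obtain ⟨M, hM, hrec, hagree⟩ := p.2.exists_recurrentLabel_agreeOn F
  exact ⟨⟨M, hM⟩, hrec, hagree⟩
end

section
/- Let 𝓝 and 𝓜 be nonempty labels. Then the label 𝓝 ⊕ 𝓜 = {n + m : n ∈ 𝓝, m ∈ 𝓜} is of finite type if and only if both 𝓝 and 𝓜 are of finite type. -/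
/-- `𝓝 ⊕ 𝓜 = {n + m : n ∈ 𝓝, m ∈ 𝓜}`. -/
def oplus (N M : Set (ℕ →₀ ℕ)) : Set (ℕ →₀ ℕ) :=
  {s | ∃ n ∈ N, ∃ m ∈ M, s = n + m}

/-! Suppose `f₀ < f₁ < ⋯` is a chain in `𝓝 ⊕ 𝓜`, with `f j = n j + m j`. Along a
nonprincipal ultrafilter `U`, the vectors eventually below `n j` form a sup-closed subset
`L_𝓝` of `𝓝`, and likewise `L_𝓜 ⊆ 𝓜`. Each `f i` lies below almost every `n j + m j`,
hence splits as `a + b` with `a ≤ n j`, `b ≤ m j`; since `a` ranges over the finite set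
`Iic (f i)`, one splitting works for `U`-almost every `j`, so `f i ∈ L_𝓝 ⊕ L_𝓜`. Thus
`L_𝓝` or `L_𝓜` is infinite, and an infinite sup-closed set of vectors contains a strictly
increasing chain, because every vector has only finitely many vectors below it. -/

open Filter

theorem SupClosed.exists_strictMono_of_infinite {α : Type*} [SemilatticeSup α]
    [LocallyFiniteOrderBot α] {s : Set α} (hs : SupClosed s) (hinf : s.Infinite) :
    ∃ f : ℕ → α, (∀ i, f i ∈ s) ∧ StrictMono f := by
  have : Nonempty s := hinf.nonempty.to_subtype
  have : NoMaxOrder s := ⟨fun ⟨w, hw⟩ => by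
    obtain ⟨x, hx, hxw⟩ := (hinf.sdiff (Set.finite_Iic w)).nonempty
    exact ⟨⟨w ⊔ x, hs hw hx⟩, left_lt_sup.2 hxw⟩⟩
  obtain ⟨f, hf⟩ := Nat.exists_strictMono s
  exact ⟨fun i => f i, fun i => (f i).2, hf⟩

theorem Finsupp.tsub_inf_le_of_le_add {ι : Type*} {f a b : ι →₀ ℕ} (h : f ≤ a + b) :
    f - f ⊓ a ≤ b := fun i => by
  have := h i
  simp only [Finsupp.coe_tsub, Finsupp.inf_apply, Finsupp.coe_add, Pi.sub_apply,
    Pi.add_apply] at this ⊢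
  omega

def eventuallyBelow {ι α : Type*} [Preorder α] (U : Filter ι) (n : ι → α) : Set α :=
  {v | ∀ᶠ j in U, v ≤ n j}

theorem supClosed_eventuallyBelow {ι α : Type*} [SemilatticeSup α] (U : Filter ι)
    (n : ι → α) : SupClosed (eventuallyBelow U n) := fun _ hv _ hw =>
  (hv.and hw).mono fun _ h => sup_le h.1 h.2

theorem IsLabel.eventuallyBelow_subset {ι : Type*} {S : Set (ℕ →₀ ℕ)} (hS : IsLabel S)
    (U : Filter ι) [U.NeBot] {n : ι → ℕ →₀ ℕ} (hn : ∀ j, n j ∈ S) :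
    eventuallyBelow U n ⊆ S := fun _ hv =>
  let ⟨j, hj⟩ := hv.exists
  hS _ _ hj (hn j)

theorem mem_oplus_eventuallyBelow {ι : Type*} (U : Ultrafilter ι) {n m : ι → ℕ →₀ ℕ}
    {f : ℕ →₀ ℕ} (hf : ∀ᶠ j in U, f ≤ n j + m j) :
    f ∈ oplus (eventuallyBelow U n) (eventuallyBelow U m) := by
  have hsplit : ∀ᶠ j in U, ∃ a ∈ Set.Iic f, a ≤ n j ∧ f - a ≤ m j :=
    hf.mono fun j h => ⟨f ⊓ n j, Set.mem_Iic.2 inf_le_left, inf_le_right, Finsupp.tsub_inf_le_of_le_add h⟩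
  obtain ⟨a, ha, hU⟩ := (Ultrafilter.eventually_exists_mem_iff (Set.finite_Iic f)).1 hsplit
  exact ⟨a, hU.mono fun _ h => h.1, f - a, hU.mono fun _ h => h.2,
    (add_tsub_cancel_of_le ha).symm⟩

theorem FiniteType.mono {S T : Set (ℕ →₀ ℕ)} (hT : FiniteType T) (hST : S ⊆ T) :
    FiniteType S := fun ⟨f, hf, hfs⟩ => hT ⟨f, fun i => hST (hf i), hfs⟩

theorem not_finiteType_of_supClosed {S L : Set (ℕ →₀ ℕ)} (hLS : L ⊆ S) (hL : SupClosed L)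
    (hinf : L.Infinite) : ¬ FiniteType S := fun hS =>
  hS.mono hLS (hL.exists_strictMono_of_infinite hinf)

theorem oplus_comm (N M : Set (ℕ →₀ ℕ)) : oplus N M = oplus M N := by
  ext s
  constructor <;> rintro ⟨a, ha, b, hb, rfl⟩ <;> exact ⟨b, hb, a, ha, add_comm a b⟩

theorem finite_oplus {N M : Set (ℕ →₀ ℕ)} (hN : N.Finite) (hM : M.Finite) :
    (oplus N M).Finite :=
  (hN.image2 (· + ·) hM).subset fun _ ⟨a, ha, b, hb, hs⟩ => ⟨a, ha, b, hb, hs.symm⟩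

theorem FiniteType.of_oplus_left {N M : Set (ℕ →₀ ℕ)} (h : FiniteType (oplus N M))
    (hM : M.Nonempty) : FiniteType N := fun ⟨g, hg, hgs⟩ =>
  let ⟨m₀, hm₀⟩ := hM
  h ⟨fun i => g i + m₀, fun i => ⟨g i, hg i, m₀, hm₀, rfl⟩, hgs.add_const m₀⟩

theorem finiteType_oplus {N M : Set (ℕ →₀ ℕ)} (hN : IsLabel N) (hM : IsLabel M)
    (hNft : FiniteType N) (hMft : FiniteType M) : FiniteType (oplus N M) := by
  rintro ⟨f, hf, hfs⟩
  choose n hn m hm hfnm using hf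
  let U := Ultrafilter.of (atTop : Filter ℕ)
  have hrange : Set.range f ⊆ oplus (eventuallyBelow U n) (eventuallyBelow U m) := by
    rintro _ ⟨i, rfl⟩
    refine mem_oplus_eventuallyBelow U (((eventually_ge_atTop i).filter_mono
      (Ultrafilter.of_le _)).mono fun j hij => ?_)
    exact hfnm j ▸ hfs.monotone hij
  have hinf := (Set.infinite_range_of_injective hfs.injective).mono hrange
  by_cases hNinf : (eventuallyBelow U n).Infinite
  · exact not_finiteType_of_supClosed (hN.eventuallyBelow_subset U hn)
      (supClosed_eventuallyBelow U n) hNinf hNft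
  · refine not_finiteType_of_supClosed (hM.eventuallyBelow_subset U hm)
      (supClosed_eventuallyBelow U m) (fun hMfin => ?_) hMft
    exact hinf (finite_oplus (Set.not_infinite.1 hNinf) hMfin)

/-- For nonempty labels `𝓝`, `𝓜`, the label `𝓝 ⊕ 𝓜` is of finite type iff both `𝓝`
and `𝓜` are of finite type. -/
theorem stmt11 (N M : Set (ℕ →₀ ℕ)) (hN : IsLabel N) (hM : IsLabel M)
    (hNne : N.Nonempty) (hMne : M.Nonempty) :
    FiniteType (oplus N M) ↔ FiniteType N ∧ FiniteType M :=
  ⟨fun h => ⟨h.of_oplus_left hMne, (oplus_comm N M ▸ h).of_oplus_left hNne⟩,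
    fun ⟨hNft, hMft⟩ => finiteType_oplus hN hM hNft hMft⟩
end

section
/- Let b ≥ 3 be an integer and let k : ℤ → ℤ be b-expanding with k(1) > b + 1. Then an integer t belongs to IP(k) if and only if t admits an expansion, and in that case the expansion of t is unique: if j₁,…,j_r and j'₁,…,j'_s are both expansions of t, then r = s and jᵢ = j'ᵢ for all i. -/
open Finset

/-- `k : ℤ → ℤ` is `b`-expanding: `k(−n) = −k(n)` and `k(n+1) > b·Σ_{i=0}^{n} k(i)` for all
`n ≥ 0`. -/
def IsExpanding (b : ℕ) (k : ℤ → ℤ) : Prop :=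
  (∀ n : ℤ, k (-n) = - k n) ∧
  ∀ n : ℕ, (b : ℤ) * ∑ i ∈ Finset.range (n + 1), k (i : ℤ) < k ((n : ℤ) + 1)

/-- `j : Fin r → ℤ` is an expansion of `t`: nonzero entries with strictly decreasing absolute
values, summing (under `k`) to `t`. -/
def IsExpansion (k : ℤ → ℤ) (t : ℤ) (r : ℕ) (j : Fin r → ℤ) : Prop :=
  (∀ i : Fin r, j i ≠ 0) ∧ (∀ i₁ i₂ : Fin r, i₁ < i₂ → |j i₂| < |j i₁|) ∧
  t = ∑ i : Fin r, k (j i)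

/-- `IP(k)`: the set of sums of finite subsets of the image set `k(ℤ)`. -/
def IPk (k : ℤ → ℤ) : Set ℤ :=
  {t | ∃ F : Finset ℤ, ↑F ⊆ Set.range k ∧ t = ∑ x ∈ F, x}

section Aux
variable (b : ℕ) (k : ℤ → ℤ)
variable (hb : 3 ≤ b)
variable (hodd : ∀ n : ℤ, k (-n) = - k n)
variable (hgr : ∀ n : ℕ, (b : ℤ) * ∑ i ∈ Finset.range (n + 1), k (i : ℤ) < k ((n : ℤ) + 1))

include hodd in
lemma k0 : k 0 = 0 := by have := hodd 0; simp at this; linarith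

include hb hodd hgr in
lemma kaux : ∀ n : ℕ, (0 ≤ ∑ i ∈ Finset.range (n+1), k (i : ℤ)) ∧ 0 < k ((n:ℤ)+1) := by
  intro n
  induction n with
  | zero =>
    have h0 : k 0 = 0 := k0 k hodd
    have h1 := hgr 0
    simp [h0] at h1 ⊢
    exact h1
  | succ n ih =>
    have hs : ∑ i ∈ Finset.range (n+2), k (i:ℤ) = (∑ i ∈ Finset.range (n+1), k (i:ℤ)) + k ((n:ℤ)+1) := by
      rw [Finset.sum_range_succ]; push_cast; ring_nf
    have hsum : 0 ≤ ∑ i ∈ Finset.range (n+2), k (i:ℤ) := by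
      rw [hs]; linarith [ih.1, ih.2]
    refine ⟨hsum, ?_⟩
    have h1 := hgr (n+1)
    have hbpos : (0:ℤ) ≤ (b:ℤ) := by positivity
    have : (0:ℤ) ≤ (b:ℤ) * ∑ i ∈ Finset.range (n+2), k (i:ℤ) := mul_nonneg hbpos hsum
    push_cast at h1 ⊢
    linarith

include hb hodd hgr in
lemma knonneg : ∀ x : ℤ, 0 ≤ x → 0 ≤ k x := by
  intro x hx
  obtain ⟨n, rfl⟩ := Int.eq_ofNat_of_zero_le hx
  cases n with
  | zero => simp [k0 k hodd]
  | succ n =>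
    have := (kaux b k hb hodd hgr n).2
    push_cast
    linarith

include hb hodd hgr in
lemma kpos : ∀ x : ℤ, 1 ≤ x → 0 < k x := by
  intro x hx
  obtain ⟨n, hn⟩ := Int.eq_ofNat_of_zero_le (by linarith : (0:ℤ) ≤ x - 1)
  have := (kaux b k hb hodd hgr n).2
  have hx' : x = (n:ℤ) + 1 := by omega
  rwa [hx']

end Aux

section Aux2
variable (b : ℕ) (k : ℤ → ℤ)
variable (hb : 3 ≤ b)
variable (hodd : ∀ n : ℤ, k (-n) = - k n)
variable (hgr : ∀ n : ℕ, (b : ℤ) * ∑ i ∈ Finset.range (n + 1), k (i : ℤ) < k ((n : ℤ) + 1))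

lemma Icc_insert (a c : ℤ) (h : a ≤ c + 1) :
    Finset.Icc a (c+1) = insert (c+1) (Finset.Icc a c) := by
  ext x; simp [Finset.mem_Icc]; omega

include hodd in
lemma IccS : ∀ M : ℕ, ∑ m ∈ Finset.Icc (1:ℤ) (M:ℤ), k m = ∑ i ∈ Finset.range (M+1), k (i:ℤ) := by
  intro M
  induction M with
  | zero => simp [k0 k hodd]
  | succ M ih =>
    have h1 : ((M:ℤ)+1) ∉ Finset.Icc (1:ℤ) (M:ℤ) := by simp
    have : ((M+1:ℕ):ℤ) = (M:ℤ)+1 := by push_cast; ring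
    rw [this, Icc_insert 1 (M:ℤ) (by omega), Finset.sum_insert h1, Finset.sum_range_succ, ih]
    push_cast
    ring

include hgr hodd in
lemma growth' : ∀ M : ℤ, 1 ≤ M → (b:ℤ) * ∑ m ∈ Finset.Icc (1:ℤ) (M-1), k m < k M := by
  intro M hM
  obtain ⟨n, hn⟩ := Int.eq_ofNat_of_zero_le (by linarith : (0:ℤ) ≤ M - 1)
  have h1 := hgr n
  rw [← IccS k hodd n] at h1
  have hM' : M = (n:ℤ) + 1 := by omega
  rw [hM', show ((n:ℤ)+1) - 1 = (n:ℤ) by ring]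
  exact h1

include hb hodd hgr in
lemma sumIcc_nonneg : ∀ B : ℤ, 0 ≤ ∑ m ∈ Finset.Icc (1:ℤ) B, k m := by
  intro B
  apply Finset.sum_nonneg
  intro m hm
  simp [Finset.mem_Icc] at hm
  exact knonneg b k hb hodd hgr m (by omega)

include hb hodd hgr in
lemma single_le_sumIcc : ∀ m : ℤ, 1 ≤ m → k m ≤ ∑ x ∈ Finset.Icc (1:ℤ) m, k x := by
  intro m hm
  apply Finset.single_le_sum (f := fun x => k x)
  · intro x hx; simp [Finset.mem_Icc] at hx; exact knonneg b k hb hodd hgr x (by omega)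
  · simp [Finset.mem_Icc]; omega

include hb hodd hgr in
lemma kstep : ∀ y : ℤ, 1 ≤ y → 3 * k y < k (y + 1) := by
  intro y hy
  have h1 := growth' b k hodd hgr (y+1) (by omega)
  rw [show (y+1) - 1 = y by ring] at h1
  have h2 := single_le_sumIcc b k hb hodd hgr y hy
  have h3 := sumIcc_nonneg b k hb hodd hgr y
  have hb3 : (3:ℤ) ≤ (b:ℤ) := by exact_mod_cast hb
  nlinarith

include hb hodd hgr in
lemma kmono : ∀ x y : ℤ, 1 ≤ x → x ≤ y → k x ≤ k y := by
  intro x y hx hxy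
  obtain ⟨n, hn⟩ := Int.eq_ofNat_of_zero_le (by omega : (0:ℤ) ≤ y - x)
  induction n generalizing y with
  | zero =>
    have hyx : y = x := by omega
    rw [hyx]
  | succ n ih =>
    have h1 := ih (y-1) (by omega) (by push_cast at hn ⊢; omega)
    have h2 := kstep b k hb hodd hgr (y-1) (by omega)
    rw [sub_add_cancel] at h2
    have h3 := kpos b k hb hodd hgr (y-1) (by omega)
    linarith

include hb hodd hgr in
lemma kgrow3 : ∀ m m' : ℤ, 1 ≤ m → m < m' → 3 * k m < k m' := by
  intro m m' hm hmm
  have h1 := kstep b k hb hodd hgr m hm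
  have h2 := kmono b k hb hodd hgr (m+1) m' (by omega) (by omega)
  linarith

include hb hodd hgr in
lemma kabs : ∀ x : ℤ, |k x| = k |x| := by
  intro x
  rcases le_or_gt 0 x with h | h
  · rw [abs_of_nonneg h, abs_of_nonneg (knonneg b k hb hodd hgr x h)]
  · have h1 : k x = - k (-x) := by rw [← hodd]; ring_nf
    have h2 : 0 ≤ k (-x) := knonneg b k hb hodd hgr (-x) (by omega)
    rw [abs_of_neg h, h1, abs_neg, abs_of_nonneg h2]

include hb hodd hgr in
lemma kstrictpos : ∀ x y : ℤ, 0 < x → x < y → k x < k y := by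
  intro x y hx hxy
  calc k x ≤ 3 * k x := by nlinarith [kpos b k hb hodd hgr x hx]
    _ < k y := kgrow3 b k hb hodd hgr x y hx hxy

include hb hodd hgr in
lemma kstrict : StrictMono k := by
  intro x y hxy
  rcases le_or_gt 0 x with hx | hx
  · rcases eq_or_lt_of_le hx with rfl | hx'
    · rw [k0 k hodd]; exact kpos b k hb hodd hgr y (by omega)
    · exact kstrictpos b k hb hodd hgr x y hx' hxy
  · rcases le_or_gt y 0 with hy | hy
    · have h1 : k x = - k (-x) := by rw [← hodd]; ring_nf
      have h2 : k y = - k (-y) := by rw [← hodd]; ring_nf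
      rcases eq_or_lt_of_le hy with rfl | hy'
      · rw [k0 k hodd, h1]
        have := kpos b k hb hodd hgr (-x) (by omega)
        linarith
      · have := kstrictpos b k hb hodd hgr (-y) (-x) (by omega) (by omega)
        linarith
    · have h1 : k x = - k (-x) := by rw [← hodd]; ring_nf
      have := kpos b k hb hodd hgr (-x) (by omega)
      have := kpos b k hb hodd hgr y (by omega)
      linarith

end Aux2

section Aux3
variable (b : ℕ) (k : ℤ → ℤ)
variable (hb : 3 ≤ b)
variable (hodd : ∀ n : ℤ, k (-n) = - k n)
variable (hgr : ∀ n : ℕ, (b : ℤ) * ∑ i ∈ Finset.range (n + 1), k (i : ℤ) < k ((n : ℤ) + 1))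

include hb hodd hgr in
lemma tail_bound (r : ℕ) (j : Fin r → ℤ) (hj0 : ∀ i, j i ≠ 0)
    (hinj : ∀ i₁ i₂ : Fin r, i₁ ≠ i₂ → |j i₁| ≠ |j i₂|) (B : ℤ) (hB : ∀ i, |j i| ≤ B) :
    |∑ i : Fin r, k (j i)| ≤ ∑ m ∈ Finset.Icc (1:ℤ) B, k m := by
  calc |∑ i : Fin r, k (j i)| ≤ ∑ i : Fin r, |k (j i)| := Finset.abs_sum_le_sum_abs _ _
    _ = ∑ i : Fin r, k |j i| := Finset.sum_congr rfl fun i _ => kabs b k hb hodd hgr (j i)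
    _ = ∑ m ∈ Finset.univ.image (fun i : Fin r => |j i|), k m := by
        rw [Finset.sum_image]
        intro x _ y _ hxy
        by_contra hne
        exact hinj x y hne hxy
    _ ≤ ∑ m ∈ Finset.Icc (1:ℤ) B, k m := by
        apply Finset.sum_le_sum_of_subset_of_nonneg
        · intro m hm
          simp only [Finset.mem_image, Finset.mem_univ, true_and] at hm
          obtain ⟨i, hi⟩ := hm
          have h1 : 0 < |j i| := abs_pos.mpr (hj0 i)
          simp [Finset.mem_Icc]
          constructor
          · omega
          · rw [← hi]; exact hB i
        · intro m hm _
          simp [Finset.mem_Icc] at hm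
          exact knonneg b k hb hodd hgr m (by omega)

include hb hodd hgr in
lemma lead (r : ℕ) (t : ℤ) (j : Fin (r+1) → ℤ) (h : IsExpansion k t (r+1) j) :
    3 * |t - k (j 0)| < k |j 0| := by
  obtain ⟨hj0, hdec, hsum⟩ := h
  have hsum' : t - k (j 0) = ∑ i : Fin r, k (j i.succ) := by
    rw [hsum, Fin.sum_univ_succ]; ring
  have hb1 : (1:ℤ) ≤ |j 0| := Int.one_le_abs (by exact hj0 0)
  have htb := tail_bound b k hb hodd hgr r (fun i => j i.succ)
    (fun i => hj0 i.succ)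
    (by
      intro i₁ i₂ hne
      rcases lt_trichotomy i₁ i₂ with h | h | h
      · exact (hdec i₁.succ i₂.succ (by simpa using h)).ne'
      · exact absurd h hne
      · exact (hdec i₂.succ i₁.succ (by simpa using h)).ne)
    (|j 0| - 1)
    (by
      intro i
      have h2 := hdec 0 i.succ (by
        rw [Fin.pos_iff_ne_zero]
        exact Fin.succ_ne_zero i)
      show |j i.succ| ≤ |j 0| - 1
      omega)
  have hg := growth' b k hodd hgr (|j 0|) hb1
  have hnn := sumIcc_nonneg b k hb hodd hgr (|j 0| - 1)
  have hb3 : (3:ℤ) ≤ (b:ℤ) := by exact_mod_cast hb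
  rw [hsum']
  nlinarith [htb, abs_nonneg (∑ i : Fin r, k (j i.succ))]

include hb hodd hgr in
lemma lead_bounds (r : ℕ) (t : ℤ) (j : Fin (r+1) → ℤ) (h : IsExpansion k t (r+1) j) :
    2 * k |j 0| < 3 * |t| ∧ 3 * |t| < 4 * k |j 0| := by
  have h1 := lead b k hb hodd hgr r t j h
  have hK : |k (j 0)| = k |j 0| := kabs b k hb hodd hgr (j 0)
  have e1 : |t| ≤ |k (j 0)| + |t - k (j 0)| := by
    calc |t| = |k (j 0) + (t - k (j 0))| := by ring_nf
      _ ≤ |k (j 0)| + |t - k (j 0)| := abs_add_le _ _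
  have e2 : |k (j 0)| ≤ |t| + |t - k (j 0)| := by
    calc |k (j 0)| = |t + -(t - k (j 0))| := by ring_nf
      _ ≤ |t| + |-(t - k (j 0))| := abs_add_le _ _
      _ = |t| + |t - k (j 0)| := by rw [abs_neg]
  constructor <;> linarith

include hb hodd hgr in
lemma lead_eq (r s : ℕ) (t : ℤ) (j : Fin (r+1) → ℤ) (j' : Fin (s+1) → ℤ)
    (hj : IsExpansion k t (r+1) j) (hj' : IsExpansion k t (s+1) j') : j 0 = j' 0 := by
  obtain ⟨c1, c2⟩ := lead_bounds b k hb hodd hgr r t j hj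
  obtain ⟨c1', c2'⟩ := lead_bounds b k hb hodd hgr s t j' hj'
  have ha1 : (1:ℤ) ≤ |j 0| := Int.one_le_abs (hj.1 0)
  have ha1' : (1:ℤ) ≤ |j' 0| := Int.one_le_abs (hj'.1 0)
  have hKpos : 0 < k |j 0| := kpos b k hb hodd hgr _ ha1
  have hKpos' : 0 < k |j' 0| := kpos b k hb hodd hgr _ ha1'
  have habs : |j 0| = |j' 0| := by
    rcases lt_trichotomy (|j 0|) (|j' 0|) with h | h | h
    · have := kgrow3 b k hb hodd hgr _ _ ha1 h; linarith
    · exact h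
    · have := kgrow3 b k hb hodd hgr _ _ ha1' h; linarith
  rcases abs_eq_abs.mp habs with h | h
  · exact h
  · exfalso
    have hkk : k (j 0) = - k (j' 0) := by rw [h]; exact hodd _
    have h1 := lead b k hb hodd hgr r t j hj
    have h1' := lead b k hb hodd hgr s t j' hj'
    have hd : (2:ℤ) * k (j 0) = (t - k (j' 0)) - (t - k (j 0)) := by rw [hkk]; ring
    have habs2 : |2 * k (j 0)| = 2 * k |j 0| := by
      rw [abs_mul, kabs b k hb hodd hgr (j 0)]; norm_num
    have htri : |(t - k (j' 0)) - (t - k (j 0))| ≤ |t - k (j' 0)| + |t - k (j 0)| := by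
      calc |(t - k (j' 0)) - (t - k (j 0))| = |(t - k (j' 0)) + -(t - k (j 0))| := by ring_nf
        _ ≤ |t - k (j' 0)| + |-(t - k (j 0))| := abs_add_le _ _
        _ = |t - k (j' 0)| + |t - k (j 0)| := by rw [abs_neg]
    rw [← hd, habs2] at htri
    rw [← habs] at h1'
    linarith

end Aux3

section Aux4
variable (b : ℕ) (k : ℤ → ℤ)
variable (hb : 3 ≤ b)
variable (hodd : ∀ n : ℤ, k (-n) = - k n)
variable (hgr : ∀ n : ℕ, (b : ℤ) * ∑ i ∈ Finset.range (n + 1), k (i : ℤ) < k ((n : ℤ) + 1))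

include hb hodd hgr in
lemma uniq : ∀ (r : ℕ) (t : ℤ) (j : Fin r → ℤ) (s : ℕ) (j' : Fin s → ℤ),
    IsExpansion k t r j → IsExpansion k t s j' →
    ∃ h : r = s, ∀ i : Fin r, j i = j' (Fin.cast h i) := by
  intro r
  induction r with
  | zero =>
    intro t j s j' hj hj'
    cases s with
    | zero => exact ⟨rfl, fun i => i.elim0⟩
    | succ s =>
      exfalso
      have ht : t = 0 := by simpa using hj.2.2
      obtain ⟨c1, _⟩ := lead_bounds b k hb hodd hgr s t j' hj'
      have := kpos b k hb hodd hgr _ (Int.one_le_abs (hj'.1 0))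
      rw [ht] at c1
      simp at c1
      linarith
  | succ r ih =>
    intro t j s j' hj hj'
    cases s with
    | zero =>
      exfalso
      have ht : t = 0 := by simpa using hj'.2.2
      obtain ⟨c1, _⟩ := lead_bounds b k hb hodd hgr r t j hj
      have := kpos b k hb hodd hgr _ (Int.one_le_abs (hj.1 0))
      rw [ht] at c1
      simp at c1
      linarith
    | succ s =>
      have h0 := lead_eq b k hb hodd hgr r s t j j' hj hj'
      have hT : IsExpansion k (t - k (j 0)) r (fun i => j i.succ) :=
        ⟨fun i => hj.1 _, fun i₁ i₂ h => hj.2.1 _ _ (by simpa using h),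
          by rw [hj.2.2, Fin.sum_univ_succ]; ring⟩
      have hT' : IsExpansion k (t - k (j 0)) s (fun i => j' i.succ) := by
        rw [h0]
        exact ⟨fun i => hj'.1 _, fun i₁ i₂ h => hj'.2.1 _ _ (by simpa using h),
          by rw [hj'.2.2, Fin.sum_univ_succ]; ring⟩
      obtain ⟨he, hcomp⟩ := ih (t - k (j 0)) (fun i => j i.succ) s (fun i => j' i.succ) hT hT'
      refine ⟨congrArg Nat.succ he, ?_⟩
      intro i
      refine Fin.cases ?_ ?_ i
      · have hc : Fin.cast (congrArg Nat.succ he) (0 : Fin (r+1)) = (0 : Fin (s+1)) := by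
          ext; simp
        rw [hc]
        exact h0
      · intro i'
        have h1 := hcomp i'
        have hc : Fin.cast (congrArg Nat.succ he) i'.succ = (Fin.cast he i').succ := by
          ext; simp
        rw [hc]
        exact h1

end Aux4

section Aux5
variable (b : ℕ) (k : ℤ → ℤ)
variable (hb : 3 ≤ b)
variable (hodd : ∀ n : ℤ, k (-n) = - k n)
variable (hgr : ∀ n : ℕ, (b : ℤ) * ∑ i ∈ Finset.range (n + 1), k (i : ℤ) < k ((n : ℤ) + 1))

include hb hodd hgr in
lemma expansion_mem (r : ℕ) (t : ℤ) (j : Fin r → ℤ) (h : IsExpansion k t r j) : t ∈ IPk k := by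
  classical
  obtain ⟨hj0, hdec, hsum⟩ := h
  have hjinj : Function.Injective j := by
    intro i₁ i₂ hii
    by_contra hne
    rcases lt_trichotomy i₁ i₂ with hlt | heq | hgt
    · exact absurd (congrArg abs hii) (hdec i₁ i₂ hlt).ne'
    · exact hne heq
    · exact absurd (congrArg abs hii) (hdec i₂ i₁ hgt).ne
  have hkinj : Function.Injective k := (kstrict b k hb hodd hgr).injective
  refine ⟨Finset.univ.image (fun i : Fin r => k (j i)), ?_, ?_⟩
  · intro x hx
    simp only [Finset.coe_image, Set.mem_image] at hx
    obtain ⟨i, _, hi⟩ := hx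
    exact ⟨j i, hi⟩
  · rw [Finset.sum_image (by intro x _ y _ hxy; exact hjinj (hkinj hxy))]
    exact hsum

include hb hodd hgr in
lemma mem_expansion (t : ℤ) (ht : t ∈ IPk k) : ∃ (r : ℕ) (j : Fin r → ℤ), IsExpansion k t r j := by
  classical
  obtain ⟨F, hF, hsum⟩ := ht
  have hchoice : ∀ x ∈ F, ∃ y, k y = x := fun x hx => hF hx
  set g : ℤ → ℤ := fun x => if h : ∃ y, k y = x then h.choose else 0 with hgdef
  have hgk : ∀ x ∈ F, k (g x) = x := by
    intro x hx
    have h := hchoice x hx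
    rw [hgdef]
    simp only [dif_pos h]
    exact h.choose_spec
  set G : Finset ℤ := F.image g with hGdef
  have hsum2 : ∑ y ∈ G, k y = t := by
    rw [hsum, hGdef, Finset.sum_image (by
      intro x hx y hy hxy
      rw [← hgk x hx, ← hgk y hy, hxy])]
    exact Finset.sum_congr rfl fun x hx => hgk x hx
  set G' : Finset ℤ := G.filter (fun a => a ≠ 0 ∧ -a ∉ G) with hG'def
  have hz : ∑ y ∈ G.filter (fun a => ¬(a ≠ 0 ∧ -a ∉ G)), k y = 0 := by
    apply Finset.sum_involution (fun a _ => -a)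
    · intro a ha
      rw [hodd]
      simp
    · intro a ha hka hcon
      have ha0 : a = 0 := by omega
      rw [ha0, k0 k hodd] at hka
      exact hka rfl
    · intro a ha
      exact neg_neg a
    · intro a ha
      rw [Finset.mem_filter] at ha ⊢
      obtain ⟨haG, hprop⟩ := ha
      push_neg at hprop
      have hnaG : -a ∈ G := by
        by_cases h0 : a = 0
        · rw [h0, neg_zero]; exact h0 ▸ haG
        · exact hprop h0
      refine ⟨hnaG, ?_⟩
      push_neg
      intro _
      rw [neg_neg]
      exact haG
  have hsumG' : ∑ y ∈ G', k y = t := by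
    have := Finset.sum_filter_add_sum_filter_not G (fun a => a ≠ 0 ∧ -a ∉ G) k
    rw [hz] at this
    rw [hG'def]
    rw [← hsum2]
    linarith [this]
  -- properties of G'
  have hG'0 : ∀ a ∈ G', a ≠ 0 := by
    intro a ha
    rw [hG'def] at ha
    exact (Finset.mem_filter.mp ha).2.1
  have hG'abs : ∀ a ∈ G', ∀ a' ∈ G', |a| = |a'| → a = a' := by
    intro a ha a' ha' habs
    rcases abs_eq_abs.mp habs with h | h
    · exact h
    · exfalso
      rw [hG'def] at ha ha'
      obtain ⟨haG, _, hnaG⟩ := Finset.mem_filter.mp ha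
      obtain ⟨ha'G, _, _⟩ := Finset.mem_filter.mp ha'
      apply hnaG
      rw [show -a = a' by omega]
      exact ha'G
  -- enumerate by decreasing absolute value
  set r := G'.card with hrdef
  set A : Finset ℤ := G'.image (fun a => |a|) with hAdef
  have hcardA : A.card = r := by
    rw [hAdef, hrdef]
    exact Finset.card_image_of_injOn (fun a ha a' ha' h => hG'abs a ha a' ha' h)
  set eA := A.orderIsoOfFin hcardA with heAdef
  set j : Fin r → ℤ := fun i => if ((eA i.rev : ℤ)) ∈ G' then ((eA i.rev : ℤ)) else -((eA i.rev : ℤ)) with hjdef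
  have hjspec : ∀ i : Fin r, j i ∈ G' ∧ |j i| = (eA i.rev : ℤ) := by
    intro i
    have hmemA : ((eA i.rev : ℤ)) ∈ G'.image (fun a => |a|) := (eA i.rev).2
    obtain ⟨a, haG', habs⟩ := Finset.mem_image.mp hmemA
    have hnn : 0 ≤ ((eA i.rev : ℤ)) := habs ▸ abs_nonneg a
    simp only [hjdef]
    by_cases hc : ((eA i.rev : ℤ)) ∈ G'
    · simp only [if_pos hc]
      exact ⟨hc, abs_of_nonneg hnn⟩
    · simp only [if_neg hc]
      have haval : a = -((eA i.rev : ℤ)) := by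
        rcases abs_eq (by exact hnn) |>.mp habs with h | h
        · exact absurd (h ▸ haG') hc
        · exact h
      refine ⟨haval ▸ haG', ?_⟩
      rw [abs_neg, abs_of_nonneg hnn]
  have hjne : ∀ i, j i ≠ 0 := fun i => hG'0 _ (hjspec i).1
  have hjdec : ∀ i₁ i₂ : Fin r, i₁ < i₂ → |j i₂| < |j i₁| := by
    intro i₁ i₂ hlt
    rw [(hjspec i₁).2, (hjspec i₂).2]
    have : i₂.rev < i₁.rev := Fin.rev_lt_rev.mpr hlt
    exact_mod_cast eA.strictMono this
  have hjinj : Function.Injective j := by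
    intro i₁ i₂ h
    by_contra hne
    rcases lt_trichotomy i₁ i₂ with hlt | heq | hgt
    · exact absurd (congrArg abs h) (hjdec i₁ i₂ hlt).ne'
    · exact hne heq
    · exact absurd (congrArg abs h) (hjdec i₂ i₁ hgt).ne
  have himage : Finset.univ.image j = G' := by
    apply Finset.eq_of_subset_of_card_le
    · intro x hx
      obtain ⟨i, _, hi⟩ := Finset.mem_image.mp hx
      exact hi ▸ (hjspec i).1
    · rw [Finset.card_image_of_injective _ hjinj]
      simp [hrdef]
  refine ⟨r, j, hjne, hjdec, ?_⟩
  rw [← hsumG', ← himage, Finset.sum_image (by intro x _ y _ h; exact hjinj h)]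

end Aux5

/-- For a `b`-expanding `k` with `b ≥ 3` and `k(1) > b+1`: `t ∈ IP(k)` iff `t` admits an
expansion, and expansions are unique. -/
theorem stmt12 (b : ℕ) (hb : 3 ≤ b) (k : ℤ → ℤ) (hk : IsExpanding b k)
    (hk1 : (b : ℤ) + 1 < k 1) (t : ℤ) :
    (t ∈ IPk k ↔ ∃ (r : ℕ) (j : Fin r → ℤ), IsExpansion k t r j) ∧
    (∀ (r s : ℕ) (j : Fin r → ℤ) (j' : Fin s → ℤ),
      IsExpansion k t r j → IsExpansion k t s j' →
      ∃ h : r = s, ∀ i : Fin r, j i = j' (Fin.cast h i)) := by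
  obtain ⟨hodd, hgr⟩ := hk
  constructor
  · constructor
    · exact mem_expansion b k hb hodd hgr t
    · rintro ⟨r, j, hexp⟩
      exact expansion_mem b k hb hodd hgr r t j hexp
  · intro r s j j' hj hj'
    exact uniq b k hb hodd hgr r t j s j' hj hj'
end

section
/- Let b ≥ 3 be an integer and let k : ℤ → ℤ be b-expanding with k(1) > b + 1. Then the set IP(k) ⊆ ℤ has upper Banach density zero: #(I ∩ IP(k))/#I → 0 as #I → ∞, over finite intervals I ⊆ ℤ. -/
/-!
Write `uₙ = k(n+1)`. As `k` is odd, every element of `IP(k)` is a sum `∑ eᵢ uᵢ` with digits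
`eᵢ ∈ {-1, 0, 1}`, and as `b ≥ 3`, each `uₙ` is at least three times `∑_{i<n} uᵢ`. So a nonzero
digit difference at a position `≥ m` forces two such sums at least `uₘ / 3` apart: an interval of
length `n ≤ uₘ / 3` contains at most `3 ^ m` of them. For `m` minimal, `4 ^ (m-1) ≤ 4 uₘ₋₁ < 12 n`,
so the proportion is `O((3/4) ^ m)`, and `m → ∞` with `n`.
-/

open Finset Filter

def IsThreeSuperincreasing (u : ℕ → ℤ) : Prop :=
  ∀ n, 3 * ∑ i ∈ range n, u i ≤ u n

def signedDigitSums (u : ℕ → ℤ) : Set ℤ :=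
  {t | ∃ e : ℕ → ℤ, (∀ i, |e i| ≤ 1) ∧ ∀ᶠ M in atTop, t = ∑ i ∈ range M, e i * u i}

namespace IsThreeSuperincreasing

variable {u : ℕ → ℤ}

theorem nonneg (hu : IsThreeSuperincreasing u) (n : ℕ) : 0 ≤ u n := by
  induction n using Nat.strong_induction_on with
  | _ n ih =>
    have := sum_nonneg fun i hi => ih i (mem_range.mp hi)
    linarith [hu n]

theorem monotone (hu : IsThreeSuperincreasing u) : Monotone u := by
  refine monotone_nat_of_le_succ fun n => ?_
  have := single_le_sum (fun i _ => hu.nonneg i) (self_mem_range_succ n)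
  linarith [hu (n + 1), hu.nonneg n]

theorem strictMono (hu : IsThreeSuperincreasing u) (h0 : 0 < u 0) : StrictMono u := by
  refine strictMono_nat_of_lt_succ fun n => ?_
  have := single_le_sum (fun i _ => hu.nonneg i) (self_mem_range_succ n)
  linarith [hu (n + 1), hu.monotone (Nat.zero_le n)]

theorem pow_four_mul_le_sum (hu : IsThreeSuperincreasing u) (n : ℕ) :
    4 ^ n * u 0 ≤ ∑ i ∈ range (n + 1), u i := by
  induction n with
  | zero => simp
  | succ n ih =>
    rw [sum_range_succ _ (n + 1), pow_succ]
    linarith [hu (n + 1)]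

theorem pow_four_le (hu : IsThreeSuperincreasing u) (h0 : 0 < u 0) (n : ℕ) :
    4 ^ n ≤ 4 * u n := by
  cases n with
  | zero => simp; omega
  | succ n =>
    have hsum := hu.pow_four_mul_le_sum n
    have hu0 : (4 : ℤ) ^ n ≤ 4 ^ n * u 0 := le_mul_of_one_le_right (by positivity) h0
    have hstep := hu (n + 1)
    rw [pow_succ]
    linarith [pow_nonneg (show (0 : ℤ) ≤ 4 by norm_num) n]

theorem sum_eq_zero_of_three_mul_abs_lt (hu : IsThreeSuperincreasing u) {c : ℕ → ℤ} {m : ℕ}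
    (hc : ∀ i, |c i| ≤ 2) (hcm : ∀ i < m, c i = 0) (M : ℕ)
    (h : 3 * |∑ i ∈ range M, c i * u i| < u m) : ∑ i ∈ range M, c i * u i = 0 := by
  induction M with
  | zero => simp
  | succ M ih =>
    rw [sum_range_succ] at h ⊢
    by_cases hcM : c M = 0
    · rw [hcM, zero_mul, add_zero] at h ⊢
      exact ih h
    -- a nonzero top digit dominates: `3 |∑| ≥ 3 (u M - 2 ∑_{i<M} uᵢ) ≥ u M ≥ u m`
    exfalso
    have hmM : m ≤ M := by
      by_contra! hlt
      exact hcM (hcm M hlt)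
    have hlow : |∑ i ∈ range M, c i * u i| ≤ 2 * ∑ i ∈ range M, u i := by
      rw [mul_sum]
      refine (abs_sum_le_sum_abs _ _).trans (sum_le_sum fun i _ => ?_)
      rw [abs_mul, abs_of_nonneg (hu.nonneg i)]
      exact mul_le_mul_of_nonneg_right (hc i) (hu.nonneg i)
    have htop : u M ≤ |c M * u M| := by
      rw [abs_mul, abs_of_nonneg (hu.nonneg M)]
      exact le_mul_of_one_le_left (hu.nonneg M) (Int.one_le_abs hcM)
    have := abs_sub_abs_le_abs_sub (c M * u M) (-∑ i ∈ range M, c i * u i)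
    rw [abs_neg, sub_neg_eq_add, add_comm] at this
    linarith [hu M, hu.monotone hmM]

theorem ncard_Ico_inter_signedDigitSums_le (hu : IsThreeSuperincreasing u) (a : ℤ) {n m : ℕ}
    (hnm : 3 * (n : ℤ) ≤ u m) : (Set.Ico a (a + n) ∩ signedDigitSums u).ncard ≤ 3 ^ m := by
  set s := Set.Ico a (a + n) ∩ signedDigitSums u
  choose! e he hte using fun t (ht : t ∈ s) => ht.2
  let digits : ℤ → Fin m → ℤ := fun t i => e t i
  let box : Finset (Fin m → ℤ) := Fintype.piFinset fun _ => Icc (-1) 1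
  have hmaps : Set.MapsTo digits s box := by
    intro t ht
    rw [mem_coe, Fintype.mem_piFinset]
    exact fun i => mem_Icc.mpr (abs_le.mp (he t ht i))
  have hinj : Set.InjOn digits s := by
    intro t ht t' ht' hdig
    obtain ⟨M, hM, hM'⟩ := ((hte t ht).and (hte t' ht')).exists
    have hc : ∀ i, |e t i - e t' i| ≤ 2 := fun i =>
      (abs_sub _ _).trans (by linarith [he t ht i, he t' ht' i])
    have hcm : ∀ i < m, e t i - e t' i = 0 := fun i hi =>
      sub_eq_zero.mpr (congrFun hdig ⟨i, hi⟩)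
    have hdiff : t - t' = ∑ i ∈ range M, (e t i - e t' i) * u i := by
      simp only [sub_mul, sum_sub_distrib, ← hM, ← hM']
    have hclose : 3 * |t - t'| < u m := by
      obtain ⟨⟨hat, hta⟩, _⟩ := ht
      obtain ⟨⟨hat', hta'⟩, _⟩ := ht'
      have : |t - t'| < n := abs_sub_lt_iff.mpr ⟨by linarith, by linarith⟩
      linarith
    rw [hdiff] at hclose
    have := hu.sum_eq_zero_of_three_mul_abs_lt hc hcm M hclose
    linarith
  calc s.ncard ≤ (box : Set (Fin m → ℤ)).ncard :=
        Set.ncard_le_ncard_of_injOn digits hmaps hinj box.finite_toSet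
    _ = 3 ^ m := by rw [Set.ncard_coe_finset, Fintype.card_piFinset_const]; rfl

theorem exists_ncard_Ico_inter_signedDigitSums_lt (hu : IsThreeSuperincreasing u)
    (h0 : 0 < u 0) (ε : ℝ) (hε : 0 < ε) :
    ∃ N : ℕ, ∀ (a : ℤ) (n : ℕ), N ≤ n →
      ((Set.Ico a (a + n) ∩ signedDigitSums u).ncard : ℝ) < ε * n := by
  obtain ⟨m₀, hm₀⟩ := exists_pow_lt_of_lt_one (show (0 : ℝ) < ε / 36 by positivity)
    (show (3 / 4 : ℝ) < 1 by norm_num)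
  refine ⟨(u m₀).toNat + 1, fun a n hn => ?_⟩
  have hn' : u m₀ < n := by omega
  have hreach : ∃ m, 3 * (n : ℤ) ≤ u m := by
    have : (n : ℤ) < 4 ^ n := by exact_mod_cast Nat.lt_pow_self (by norm_num)
    exact ⟨n + 2, by
      linarith [hu.pow_four_le h0 (n + 2), pow_succ (4 : ℤ) n, pow_succ (4 : ℤ) (n + 1)]⟩
  have hstart : ¬ 3 * (n : ℤ) ≤ u 0 := by linarith [hu.monotone (Nat.zero_le m₀)]
  have hfind := (Nat.find_pos hreach).mpr hstart
  obtain ⟨m, hm_lt, hm_le⟩ : ∃ m, u m < 3 * n ∧ 3 * (n : ℤ) ≤ u (m + 1) :=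
    ⟨Nat.find hreach - 1, not_le.mp (Nat.find_min hreach (by omega)), by
      rw [Nat.sub_add_cancel hfind]; exact Nat.find_spec hreach⟩
  have hm₀m : m₀ ≤ m := by
    by_contra! h
    linarith [hu.monotone (show m + 1 ≤ m₀ by omega)]
  have hgrowth : (4 : ℝ) ^ m < 12 * n := by
    have : (4 : ℤ) ^ m < 12 * n := by linarith [hu.pow_four_le h0 m]
    exact_mod_cast this
  have hsmall : (3 / 4 : ℝ) ^ m < ε / 36 :=
    (pow_le_pow_of_le_one (by norm_num) (by norm_num) hm₀m).trans_lt hm₀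
  calc ((Set.Ico a (a + n) ∩ signedDigitSums u).ncard : ℝ) ≤ 3 ^ (m + 1) := by
        exact_mod_cast hu.ncard_Ico_inter_signedDigitSums_le a hm_le
    _ = 3 * (3 / 4) ^ m * 4 ^ m := by rw [div_pow]; field_simp; ring
    _ < ε * n := by nlinarith [pow_pos (show (0 : ℝ) < 3 / 4 by norm_num) m]

end IsThreeSuperincreasing

theorem sum_Icc_neg_natCast {M : Type*} [AddCommMonoid M] (f : ℤ → M) (n : ℕ) :
    ∑ j ∈ Icc (-n : ℤ) n, f j = f 0 + ∑ i ∈ range n, (f (i + 1) + f (-(i + 1))) := by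
  induction n with
  | zero => simp
  | succ n ih =>
    have hIcc : Icc (-(n + 1 : ℕ) : ℤ) (n + 1 : ℕ)
        = insert (-((n : ℤ) + 1)) (insert ((n : ℤ) + 1) (Icc (-n : ℤ) n)) := by
      ext x
      simp only [mem_Icc, mem_insert]
      omega
    rw [hIcc, sum_insert (by simp only [mem_insert, mem_Icc]; omega),
      sum_insert (by simp only [mem_Icc]; omega), ih, sum_range_succ]
    abel

namespace IsExpanding

variable {b : ℕ} {k : ℤ → ℤ}

theorem map_zero (hk : IsExpanding b k) : k 0 = 0 := by
  linarith [show k 0 = -k 0 by simpa using hk.1 0]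

theorem zero_lt_map_one (hk : IsExpanding b k) : 0 < k 1 := by
  simpa [hk.map_zero] using hk.2 0

theorem isThreeSuperincreasing (hk : IsExpanding b k) (hb : 3 ≤ b) :
    IsThreeSuperincreasing fun n : ℕ => k ((n : ℤ) + 1) := by
  have hsum : ∀ n : ℕ, ∑ i ∈ range n, k ((i : ℤ) + 1) = ∑ i ∈ range (n + 1), k (i : ℤ) := by
    intro n
    simp [sum_range_succ', hk.map_zero]
  have hnonneg : ∀ n : ℕ, 0 ≤ ∑ i ∈ range n, k ((i : ℤ) + 1) := by
    intro n
    induction n with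
    | zero => simp
    | succ n ih =>
      have hstep := hk.2 n
      rw [← hsum] at hstep
      rw [sum_range_succ]
      nlinarith
  intro n
  have := hk.2 n
  rw [← hsum] at this
  have hb' : (3 : ℤ) ≤ b := by exact_mod_cast hb
  nlinarith [hnonneg n]

theorem strictMono (hk : IsExpanding b k) (hb : 3 ≤ b) : StrictMono k := by
  have hnat : ∀ j : ℕ, k j < k (j + 1) := by
    rintro (_ | i)
    · simpa [hk.map_zero] using hk.zero_lt_map_one
    · exact_mod_cast (hk.isThreeSuperincreasing hb).strictMono
        (by simpa using hk.zero_lt_map_one) (Nat.lt_succ_self i)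
  refine strictMono_int_of_lt_succ fun n => ?_
  obtain ⟨j, rfl | rfl⟩ := Int.eq_nat_or_neg n
  · exact hnat j
  · rcases j with _ | i
    · exact hnat 0
    · rw [show -((i + 1 : ℕ) : ℤ) + 1 = -i by push_cast; ring, hk.1, hk.1]
      exact neg_lt_neg (by exact_mod_cast hnat i)

theorem IPk_subset_signedDigitSums (hk : IsExpanding b k) (hb : 3 ≤ b) :
    IPk k ⊆ signedDigitSums fun n : ℕ => k ((n : ℤ) + 1) := by
  classical
  rintro _ ⟨F, hF, rfl⟩
  have hinj := (hk.strictMono hb).injective.injOn (s := k ⁻¹' F)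
  set G := F.preimage k hinj
  let d : ℤ → ℤ := fun j => if j ∈ G then 1 else 0
  refine ⟨fun i => d (i + 1) - d (-(i + 1)), fun i => ?_,
    eventually_atTop.mpr ⟨G.sup Int.natAbs, fun M hM => ?_⟩⟩
  · simp only [d]
    split_ifs <;> norm_num
  · have hGM : G ⊆ Icc (-M : ℤ) M := fun j hj => by
      have := le_sup (f := Int.natAbs) hj
      simp only [mem_Icc]
      omega
    calc ∑ x ∈ F, x = ∑ j ∈ G, k j :=
          (sum_preimage k F hinj _ fun x hx hx' => absurd (hF hx) hx').symm
      _ = ∑ j ∈ G, d j * k j := sum_congr rfl fun j hj => by simp [d, hj]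
      _ = ∑ j ∈ Icc (-M : ℤ) M, d j * k j := sum_subset hGM fun j _ hj => by simp [d, hj]
      _ = _ := by
          rw [sum_Icc_neg_natCast, hk.map_zero, mul_zero, zero_add]
          refine sum_congr rfl fun i _ => ?_
          rw [hk.1]
          ring

end IsExpanding

theorem stmt13_general (b : ℕ) (hb : 3 ≤ b) (k : ℤ → ℤ) (hk : IsExpanding b k) :
    ∀ ε : ℝ, 0 < ε → ∃ N : ℕ, ∀ (a : ℤ) (n : ℕ), N ≤ n →
      ((Set.Ico a (a + n) ∩ IPk k).ncard : ℝ) < ε * n := by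
  intro ε hε
  obtain ⟨N, hN⟩ := (hk.isThreeSuperincreasing hb).exists_ncard_Ico_inter_signedDigitSums_lt
    (by simpa using hk.zero_lt_map_one) ε hε
  refine ⟨N, fun a n hn => lt_of_le_of_lt ?_ (hN a n hn)⟩
  exact_mod_cast Set.ncard_le_ncard
    (Set.inter_subset_inter_right _ (hk.IPk_subset_signedDigitSums hb))
    ((Set.finite_Ico _ _).subset Set.inter_subset_left)

/-- For a `b`-expanding `k` with `b ≥ 3` and `k(1) > b+1`, the set `IP(k)` has upper Banach
density zero: `#(I ∩ IP(k))/#I → 0` as `#I → ∞` over finite intervals `I ⊆ ℤ`. -/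
theorem stmt13 (b : ℕ) (hb : 3 ≤ b) (k : ℤ → ℤ) (hk : IsExpanding b k)
    (hk1 : (b : ℤ) + 1 < k 1) :
    ∀ ε : ℝ, 0 < ε → ∃ N : ℕ, ∀ (a : ℤ) (n : ℕ), N ≤ n →
      ((Set.Ico a (a + n) ∩ IPk k).ncard : ℝ) < ε * n :=
  stmt13_general b hb k hk
end

section
/- Let A ⊆ ℤ have Banach density zero. Then: (1) for every x ∈ Z(A), the set {t ∈ ℤ : x_t = 1} has Banach density zero; (2) the point mass δ_e at the all-zero point e = χ(∅) is the unique shift-invariant Borel probability measure on Z(A); (3) {e} is the unique minimal subset of Z(A). -/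
/-! For each `k`, the points in which every window of length at least `N` has at most a `1/k`
proportion of ones form a closed shift-invariant set; choosing `N` from the Banach density of
`A`, it contains every `χ(A₁)` with `A₁ ⊆ A`, hence all of `Z(A)`. This gives (1).

Integrating the count of ones in a window of length `n` against a shift-invariant probability
measure `μ` on `Z(A)` gives `k · n · μ{x₀ = 1} ≤ n` for every `k`, so every cylinder `{x_t = 1}`
is null and `μ = δ_e`.

A set of Banach density zero has arbitrarily long gaps. Translating the gaps of a point of a
closed shift-invariant set to the origin gives points of that set converging to `e`, so every
minimal subset of `Z(A)` contains the fixed point `e`, and therefore equals `{e}`. -/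

open MeasureTheory

/-- The shift map on `{0,1}^ℤ`. -/
def shiftB (x : ℤ → Bool) : ℤ → Bool := fun n => x (n + 1)

/-- The indicator point `χ(A) ∈ {0,1}^ℤ` of a set `A ⊆ ℤ`. -/
noncomputable def chiB (A : Set ℤ) : ℤ → Bool :=
  fun t => @decide (t ∈ A) (Classical.propDecidable _)

/-- `B ⊆ ℤ` has Banach density zero: `#(I ∩ B)/#I → 0` as `#I → ∞` over finite intervals. -/
def BanachZero (B : Set ℤ) : Prop :=
  ∀ ε : ℝ, 0 < ε → ∃ N : ℕ, ∀ (a : ℤ) (n : ℕ), N ≤ n →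
    ((Set.Ico a (a + n) ∩ B).ncard : ℝ) < ε * n

/-- `Z(A)`: the smallest closed shift-invariant subset of `{0,1}^ℤ` containing `χ(A₁)` for
every `A₁ ⊆ A`. -/
def ZA (A : Set ℤ) : Set (ℤ → Bool) :=
  ⋂₀ {Z : Set (ℤ → Bool) | IsClosed Z ∧ shiftB '' Z = Z ∧
      ∀ A₁ : Set ℤ, A₁ ⊆ A → chiB A₁ ∈ Z}

/-- A minimal subset for the shift. -/
def IsMinimalShift (M : Set (ℤ → Bool)) : Prop :=
  M.Nonempty ∧ IsClosed M ∧ shiftB '' M = M ∧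
    ∀ M' ⊆ M, M'.Nonempty → IsClosed M' → shiftB '' M' = M' → M' = M

noncomputable def onesCount (x : ℤ → Bool) (a : ℤ) (n : ℕ) : ℕ :=
  ∑ t ∈ Finset.Ico a (a + n), (x t).toNat

lemma onesCount_eq_card (x : ℤ → Bool) (a : ℤ) (n : ℕ) :
    onesCount x a n = ((Finset.Ico a (a + n)).filter (fun t => x t = true)).card := by
  rw [Finset.card_filter, onesCount]
  refine Finset.sum_congr rfl fun t _ => ?_
  cases x t <;> rfl

lemma ncard_Ico_inter_support (x : ℤ → Bool) (a : ℤ) (n : ℕ) :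
    (Set.Ico a (a + n) ∩ {t | x t = true}).ncard = onesCount x a n := by
  rw [onesCount_eq_card, ← Set.ncard_coe_finset]
  congr 1
  ext t
  simp

lemma onesCount_add (x : ℤ → Bool) (a : ℤ) (m n : ℕ) :
    onesCount x a (m + n) = onesCount x a m + onesCount x (a + m) n := by
  unfold onesCount
  rw [← Finset.sum_union (Finset.Ico_disjoint_Ico_consecutive _ _ _),
    Finset.Ico_union_Ico_eq_Ico (by omega) (by omega)]
  push_cast
  ring_nf

lemma onesCount_translate (x : ℤ → Bool) (c a : ℤ) (n : ℕ) :
    onesCount (fun m => x (m + c)) a n = onesCount x (a + c) n := by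
  unfold onesCount
  rw [Finset.sum_Ico_add' (fun t => (x t).toNat), add_right_comm]

lemma continuous_onesCount (a : ℤ) (n : ℕ) : Continuous fun x : ℤ → Bool => onesCount x a n :=
  continuous_finsetSum _ fun t _ =>
    (continuous_of_discreteTopology (f := Bool.toNat)).comp (continuous_apply t)

lemma one_le_onesCount {x : ℤ → Bool} {a t : ℤ} {n : ℕ} (ht : t ∈ Set.Ico a (a + n))
    (hxt : x t = true) : 1 ≤ onesCount x a n := by
  calc 1 = (x t).toNat := by rw [hxt]; rfl
    _ ≤ onesCount x a n :=
      Finset.single_le_sum (f := fun t => (x t).toNat) (fun _ _ => Nat.zero_le _)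
        (Finset.mem_Ico.mpr ht)

lemma shiftB_injective : Function.Injective shiftB := fun x y h => funext fun m => by
  simpa [shiftB] using congrFun h (m - 1)

lemma image_shiftB_eq_iff {Z : Set (ℤ → Bool)} :
    shiftB '' Z = Z ↔ ∀ c : ℤ, ∀ x ∈ Z, (fun m => x (m + c)) ∈ Z := by
  constructor
  · intro hZ c x hx
    have hpre : shiftB ⁻¹' Z = Z := by
      conv_lhs => rw [← hZ]
      exact Set.preimage_image_eq Z shiftB_injective
    induction c using Int.induction_on with
    | zero => simpa using hx
    | succ k ih =>
      rw [← hZ]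
      exact ⟨_, ih, funext fun m => by simp only [shiftB]; ring_nf⟩
    | pred k ih =>
      have hstep : shiftB (fun m => x (m + (-(k : ℤ) - 1))) = fun m => x (m + -(k : ℤ)) :=
        funext fun m => by simp only [shiftB]; ring_nf
      rw [← hpre, Set.mem_preimage, hstep]
      exact ih
  · intro h
    refine subset_antisymm ?_ fun x hx => ⟨_, h (-1) x hx, funext fun m => by simp [shiftB]⟩
    rintro _ ⟨x, hx, rfl⟩
    exact h 1 x hx

lemma ZA_subset {A : Set ℤ} {Z : Set (ℤ → Bool)} (hZ : IsClosed Z) (hshift : shiftB '' Z = Z)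
    (hchi : ∀ A₁ ⊆ A, chiB A₁ ∈ Z) : ZA A ⊆ Z :=
  Set.sInter_subset_of_mem ⟨hZ, hshift, hchi⟩

lemma isClosed_ZA (A : Set ℤ) : IsClosed (ZA A) :=
  isClosed_sInter fun _ hZ => hZ.1

lemma zero_mem_ZA (A : Set ℤ) : (fun _ : ℤ => false) ∈ ZA A := by
  have : chiB ∅ = fun _ : ℤ => false := funext fun t => by simp [chiB]
  exact fun Z hZ => this ▸ hZ.2.2 ∅ (Set.empty_subset A)

def sparsePoints (k N : ℕ) : Set (ℤ → Bool) :=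
  {x | ∀ (a : ℤ) (n : ℕ), N ≤ n → k * onesCount x a n ≤ n}

lemma isClosed_sparsePoints (k N : ℕ) : IsClosed (sparsePoints k N) := by
  simp only [sparsePoints, Set.ofPred_forall]
  exact isClosed_iInter fun a => isClosed_iInter fun n => isClosed_iInter fun _ =>
    (isClosed_discrete {m | k * m ≤ n}).preimage (continuous_onesCount a n)

lemma image_shiftB_sparsePoints (k N : ℕ) : shiftB '' sparsePoints k N = sparsePoints k N :=
  image_shiftB_eq_iff.mpr fun c x hx a n hn => by
    rw [onesCount_translate]
    exact hx _ n hn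

lemma chiB_mem_sparsePoints {A A₁ : Set ℤ} (hA₁ : A₁ ⊆ A) {k N : ℕ}
    (hN : ∀ (a : ℤ) (n : ℕ), N ≤ n → k * (Set.Ico a (a + n) ∩ A).ncard ≤ n) :
    chiB A₁ ∈ sparsePoints k N := by
  intro a n hn
  have hsupp : {t | chiB A₁ t = true} = A₁ := by ext t; simp [chiB]
  rw [← ncard_Ico_inter_support, hsupp]
  refine le_trans (Nat.mul_le_mul_left k (Set.ncard_le_ncard ?_ ?_)) (hN a n hn)
  · exact Set.inter_subset_inter_right _ hA₁
  · exact (Set.finite_Ico _ _).inter_of_left A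

lemma exists_ZA_subset_sparsePoints {A : Set ℤ} (hA : BanachZero A) (k : ℕ) :
    ∃ N, ZA A ⊆ sparsePoints k N := by
  obtain ⟨N, hN⟩ := hA (k + 1 : ℝ)⁻¹ (by positivity)
  refine ⟨N, ZA_subset (isClosed_sparsePoints k N) (image_shiftB_sparsePoints k N)
    fun A₁ hA₁ => chiB_mem_sparsePoints hA₁ fun a n hn => ?_⟩
  have h := hN a n hn
  rw [inv_mul_eq_div, lt_div_iff₀ (by positivity)] at h
  have : ((k * (Set.Ico a (a + n) ∩ A).ncard : ℕ) : ℝ) < n := by push_cast; linarith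
  exact_mod_cast this.le

lemma banachZero_support_of_forall_mem_sparsePoints {x : ℤ → Bool}
    (hx : ∀ k, ∃ N, x ∈ sparsePoints k N) : BanachZero {t | x t = true} := by
  intro ε hε
  obtain ⟨k, hk⟩ := exists_nat_gt ε⁻¹
  obtain ⟨N, hN⟩ := hx k
  refine ⟨N + 1, fun a n hn => ?_⟩
  rw [ncard_Ico_inter_support]
  have hcount : ((k * onesCount x a n : ℕ) : ℝ) ≤ n := by exact_mod_cast hN a n (by omega)
  have hεk : 1 < k * ε := by rwa [inv_lt_iff_one_lt_mul₀ hε] at hk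
  have hn1 : (1 : ℝ) ≤ n := by exact_mod_cast (by omega : 1 ≤ n)
  push_cast at hcount
  nlinarith

lemma exists_gap_of_banachZero {x : ℤ → Bool} (hx : BanachZero {t | x t = true}) (L : ℕ) :
    ∃ a : ℤ, ∀ t ∈ Set.Ico a (a + L), x t = false := by
  by_contra! h
  simp only [ne_eq, Bool.not_eq_false] at h
  have hL : 0 < L := by
    obtain ⟨t, ht, -⟩ := h 0
    have := ht.1.trans_lt ht.2
    omega
  have hcount : ∀ m : ℕ, ∀ a, m ≤ onesCount x a (m * L) := by
    intro m
    induction m with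
    | zero => simp
    | succ m ih =>
      intro a
      obtain ⟨t, ht, hxt⟩ := h (a + (m * L : ℕ))
      rw [Nat.succ_mul, onesCount_add]
      exact Nat.add_le_add (ih a) (one_le_onesCount ht hxt)
  obtain ⟨N, hN⟩ := hx (L : ℝ)⁻¹ (by positivity)
  have hlt := hN 0 (N * L) (Nat.le_mul_of_pos_right N hL)
  rw [ncard_Ico_inter_support] at hlt
  have hN' : ((L : ℝ)⁻¹ * ((N * L : ℕ) : ℝ)) = N := by
    push_cast
    field_simp
  rw [hN'] at hlt
  exact absurd (hcount N 0) (by exact_mod_cast hlt.not_ge)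

lemma zero_mem_of_exists_gap {M : Set (ℤ → Bool)} (hM : IsClosed M) (hshift : shiftB '' M = M)
    {x : ℤ → Bool} (hx : x ∈ M) (hgap : ∀ L : ℕ, ∃ a : ℤ, ∀ t ∈ Set.Ico a (a + L), x t = false) :
    (fun _ : ℤ => false) ∈ M := by
  -- the gap of length `2m + 1`, recentred, makes the `m`-th translate vanish on `[-m, m]`
  choose a ha using fun m : ℕ => hgap (2 * m + 1)
  have hy : ∀ m : ℕ, (fun t => x (t + (a m + m))) ∈ M :=
    fun m => image_shiftB_eq_iff.mp hshift _ x hx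
  have htend : Filter.Tendsto (fun (m : ℕ) (t : ℤ) => x (t + (a m + m))) Filter.atTop
      (nhds fun _ => false) := by
    refine tendsto_pi_nhds.mpr fun t => tendsto_const_nhds.congr' ?_
    refine Filter.eventually_atTop.mpr ⟨t.natAbs, fun m hm => (ha m _ ⟨?_, ?_⟩).symm⟩ <;>
      push_cast <;> omega
  exact hM.mem_of_tendsto htend (Filter.Eventually.of_forall hy)

lemma isMinimalShift_singleton {p : ℤ → Bool} (hp : shiftB p = p) : IsMinimalShift {p} :=
  ⟨Set.singleton_nonempty p, isClosed_singleton, by rw [Set.image_singleton, hp],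
    fun _ hsub hne _ _ => hne.subset_singleton_iff.mp hsub⟩

lemma IsMinimalShift.eq_singleton_of_mem {M : Set (ℤ → Bool)} (hM : IsMinimalShift M)
    {p : ℤ → Bool} (hpM : p ∈ M) (hp : shiftB p = p) : M = {p} :=
  (hM.2.2.2 {p} (Set.singleton_subset_iff.mpr hpM) (Set.singleton_nonempty p)
    isClosed_singleton (isMinimalShift_singleton hp).2.2.1).symm

section Measure

open scoped ENNReal

variable {μ : Measure (ℤ → Bool)}

lemma measurableSet_coord_eq_true (t : ℤ) : MeasurableSet {x : ℤ → Bool | x t = true} :=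
  measurableSet_eq_fun (measurable_pi_apply t) measurable_const

lemma measure_coord_eq_true_eq_of_shift_invariant
    (hinv : ∀ B : Set (ℤ → Bool), MeasurableSet B → μ (shiftB ⁻¹' B) = μ B) (t : ℤ) :
    μ {x | x t = true} = μ {x | x 0 = true} := by
  have hstep : ∀ s : ℤ, μ {x | x (s + 1) = true} = μ {x | x s = true} :=
    fun s => hinv _ (measurableSet_coord_eq_true s)
  induction t using Int.induction_on with
  | zero => rfl
  | succ k ih => rw [hstep, ih]
  | pred k ih => rw [← ih, ← hstep]; ring_nf

lemma lintegral_onesCount (μ : Measure (ℤ → Bool)) (a : ℤ) (n : ℕ) :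
    ∫⁻ x, (onesCount x a n : ℝ≥0∞) ∂μ = ∑ t ∈ Finset.Ico a (a + n), μ {x | x t = true} := by
  have hind : ∀ t x, (((x t).toNat : ℕ) : ℝ≥0∞) = {x : ℤ → Bool | x t = true}.indicator 1 x := by
    intro t x
    cases hxt : x t <;> simp [Set.indicator, hxt]
  simp only [onesCount, Nat.cast_sum, hind]
  rw [lintegral_finsetSum _ fun t _ => measurable_one.indicator (measurableSet_coord_eq_true t)]
  exact Finset.sum_congr rfl fun t _ => lintegral_indicator_one (measurableSet_coord_eq_true t)

lemma lintegral_onesCount_of_shift_invariant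
    (hinv : ∀ B : Set (ℤ → Bool), MeasurableSet B → μ (shiftB ⁻¹' B) = μ B) (a : ℤ) (n : ℕ) :
    ∫⁻ x, (onesCount x a n : ℝ≥0∞) ∂μ = n * μ {x | x 0 = true} := by
  simp [lintegral_onesCount, measure_coord_eq_true_eq_of_shift_invariant hinv]

lemma measure_coord_eq_true_eq_zero [IsProbabilityMeasure μ]
    (hinv : ∀ B : Set (ℤ → Bool), MeasurableSet B → μ (shiftB ⁻¹' B) = μ B)
    (hsparse : ∀ k : ℕ, ∃ N, ∀ᵐ x ∂μ, x ∈ sparsePoints k N) :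
    μ {x | x 0 = true} = 0 := by
  by_contra h
  obtain ⟨k, hk⟩ := ENNReal.exists_nat_mul_gt h ENNReal.one_ne_top
  obtain ⟨N, hN⟩ := hsparse k
  have hn : ((N + 1 : ℕ) : ℝ≥0∞) ≠ 0 := by simp
  have hint : (N + 1 : ℕ) * (k * μ {x | x 0 = true}) ≤ (N + 1 : ℕ) * 1 := calc
    (N + 1 : ℕ) * (k * μ {x | x 0 = true})
        = ∫⁻ x, ((k * onesCount x 0 (N + 1) : ℕ) : ℝ≥0∞) ∂μ := by
      simp_rw [Nat.cast_mul]
      rw [lintegral_const_mul' _ _ (ENNReal.natCast_ne_top k),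
        lintegral_onesCount_of_shift_invariant hinv]
      ring
    _ ≤ ∫⁻ _, ((N + 1 : ℕ) : ℝ≥0∞) ∂μ :=
      lintegral_mono_ae (hN.mono fun x hx => by exact_mod_cast hx 0 (N + 1) N.le_succ)
    _ = (N + 1 : ℕ) * 1 := by simp
  exact (ENNReal.mul_le_mul_iff_right hn (ENNReal.natCast_ne_top _)).mp hint |>.not_gt hk

lemma ae_eq_zero_of_measure_coord_eq_true_eq_zero
    (hinv : ∀ B : Set (ℤ → Bool), MeasurableSet B → μ (shiftB ⁻¹' B) = μ B)
    (h0 : μ {x | x 0 = true} = 0) : ∀ᵐ x ∂μ, x = fun _ => false := by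
  have hnull : μ (⋃ t : ℤ, {x : ℤ → Bool | x t = true}) = 0 :=
    measure_iUnion_null fun t => (measure_coord_eq_true_eq_of_shift_invariant hinv t).trans h0
  refine measure_mono_null (fun x hx => ?_) hnull
  simpa [funext_iff] using hx

lemma eq_dirac_of_ae_eq {α : Type*} [MeasurableSpace α] [MeasurableSingletonClass α]
    {ν : Measure α} [IsProbabilityMeasure ν] {p : α} (h : ∀ᵐ x ∂ν, x = p) :
    ν = Measure.dirac p := by
  have hp : ν {p} = 1 := (prob_compl_eq_zero_iff (measurableSet_singleton p)).mp h
  calc ν = ν.restrict {p} := (Measure.restrict_eq_self_of_ae_mem h).symm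
    _ = Measure.dirac p := by rw [Measure.restrict_singleton, hp, one_smul]

end Measure

/-- If `A ⊆ ℤ` has Banach density zero then: every `x ∈ Z(A)` has support of Banach density
zero; `δ_e` is the unique shift-invariant Borel probability measure on `Z(A)`; and `{e}` is
the unique minimal subset of `Z(A)`, where `e` is the all-zero point. -/
theorem stmt14 (A : Set ℤ) (hA : BanachZero A) :
    (∀ x ∈ ZA A, BanachZero {t : ℤ | x t = true}) ∧
    (∀ μ : Measure (ℤ → Bool), IsProbabilityMeasure μ →
      (∀ B : Set (ℤ → Bool), MeasurableSet B → μ (shiftB ⁻¹' B) = μ B) →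
      μ (ZA A) = 1 → μ = Measure.dirac (fun _ => false)) ∧
    ((fun _ : ℤ => false) ∈ ZA A ∧ IsMinimalShift {fun _ : ℤ => false} ∧
      ∀ M : Set (ℤ → Bool), M ⊆ ZA A → IsMinimalShift M → M = {fun _ : ℤ => false}) := by
  have hsparse : ∀ k, ∃ N, ZA A ⊆ sparsePoints k N := exists_ZA_subset_sparsePoints hA
  have hsupport : ∀ x ∈ ZA A, BanachZero {t | x t = true} := fun x hx =>
    banachZero_support_of_forall_mem_sparsePoints fun k => (hsparse k).imp fun _ hN => hN hx
  have hfix : shiftB (fun _ : ℤ => false) = fun _ => false := rfl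
  refine ⟨hsupport, fun μ _ hinv hZ => ?_, zero_mem_ZA A, isMinimalShift_singleton hfix,
    fun M hMZ hM => ?_⟩
  · have hae : ∀ᵐ x ∂μ, x ∈ ZA A :=
      mem_ae_iff.mpr ((prob_compl_eq_zero_iff (isClosed_ZA A).measurableSet).mpr hZ)
    refine eq_dirac_of_ae_eq (ae_eq_zero_of_measure_coord_eq_true_eq_zero hinv ?_)
    exact measure_coord_eq_true_eq_zero hinv fun k =>
      (hsparse k).imp fun _ hN => hae.mono fun _ hx => hN hx
  · obtain ⟨x, hx⟩ := hM.1
    exact hM.eq_singleton_of_mem (zero_mem_of_exists_gap hM.2.1 hM.2.2.1 hx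
      (exists_gap_of_banachZero (hsupport x (hMZ hx)))) hfix
end
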